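/- arXiv:2512.07740 — 6 statements merged into one kernel-verified Lean document; each statement's English description precedes it below -/
import Mathlib

section
/- Let d ≥ 3 be an integer and let T be a d-regular tree. Then for every finite nonempty set W of vertices of T, the set W together with its external vertex boundary satisfies |W ∪ ∂W| ≥ (d−1)·|W|. (This is the paper's claim that the star-expansion constant β_S = inf_W |W ∪ ∂W|/|W| of the d-regular tree is at least d−1, which is the coefficient used in its star–vertex entropy inequality on trees.) -/
/-- The external vertex boundary of a set `W` in a simple graph `G`:
vertices outside `W` having at least one neighbour in `W`. -/
def extBoundary {V : Type*} (G : SimpleGraph V) (W : Set V) : Set V :=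
  {v | v ∉ W ∧ ∃ w ∈ W, G.Adj v w}

/-- In a `d`-regular tree (`d ≥ 3`), every finite nonempty vertex set `W`
satisfies `|W ∪ ∂W| ≥ (d−1)·|W|`. -/
theorem stmt_0 {V : Type*} (G : SimpleGraph V) (d : ℕ) (hd : 3 ≤ d)
    (hconn : G.Connected) (hacyclic : G.IsAcyclic)
    (hreg : ∀ v : V, (G.neighborSet v).ncard = d)
    (W : Set V) (hWfin : W.Finite) (hWne : W.Nonempty) :
    (d - 1) * W.ncard ≤ (W ∪ extBoundary G W).ncard := by
  classical
  obtain ⟨r, hr⟩ := hWne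
  have hT : G.IsTree := ⟨hconn, hacyclic⟩
  choose p hp hp' using fun v => hT.existsUnique_path v r
  set parent : V → V := fun v => (p v).getVert 1 with hparent
  -- Key: adjacency forces parent relation one way or the other
  have keyA : ∀ w v : V, G.Adj w v → v = parent w ∨ parent v = w := by
    intro w v hadj
    by_cases hvp : v = parent w
    · exact Or.inl hvp
    · right
      have hvsup : v ∉ (p w).support := by
        intro hmem
        obtain ⟨q, q2, hq⟩ := SimpleGraph.Walk.mem_support_iff_exists_append.mp hmem
        have hqpath : q.IsPath := by
          have := hp w; rw [hq] at this
          exact this.of_append_left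
        have hq1 : (⟨q, hqpath⟩ : G.Path w v) =
            ⟨SimpleGraph.Walk.cons hadj SimpleGraph.Walk.nil, by simp [hadj.ne]⟩ :=
          hacyclic.path_unique _ _
        have hq2 : q = SimpleGraph.Walk.cons hadj SimpleGraph.Walk.nil :=
          congrArg Subtype.val hq1
        apply hvp
        rw [hparent]
        simp only [hq, hq2, SimpleGraph.Walk.cons_append, SimpleGraph.Walk.nil_append]
        rw [SimpleGraph.Walk.getVert_cons_succ]
        simp [SimpleGraph.Walk.getVert_zero]
      have hpath : (SimpleGraph.Walk.cons hadj.symm (p w)).IsPath :=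
        (SimpleGraph.Walk.cons_isPath_iff _ _).mpr ⟨hp w, hvsup⟩
      have := hp' v _ hpath
      show (p v).getVert 1 = w
      rw [← this, SimpleGraph.Walk.getVert_cons_succ,
        SimpleGraph.Walk.getVert_zero]
  -- neighbor sets are finite
  have hNfin : ∀ v : V, (G.neighborSet v).Finite := by
    intro v
    by_contra h
    have := Set.Infinite.ncard h
    rw [hreg v] at this; omega
  -- children sets
  set C : V → Set V := fun w => {v | G.Adj w v ∧ parent v = w} with hC
  have hCfin : ∀ w, (C w).Finite := fun w =>
    (hNfin w).subset (fun v hv => hv.1)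
  have hCcard : ∀ w, d - 1 ≤ (C w).ncard := by
    intro w
    have hsub : G.neighborSet w \ {parent w} ⊆ C w := by
      intro v hv
      obtain ⟨hvN, hvne⟩ := hv
      rcases keyA w v hvN with h | h
      · exact absurd h (by simpa using hvne)
      · exact ⟨hvN, h⟩
    calc d - 1 ≤ (G.neighborSet w).ncard - ({parent w} : Set V).ncard := by
            rw [hreg w, Set.ncard_singleton]
      _ ≤ (G.neighborSet w \ {parent w}).ncard := by
            rw [Set.ncard_eq_toFinset_card _ (hNfin w),
              Set.ncard_eq_toFinset_card ({parent w} : Set V) (Set.finite_singleton _),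
              Set.ncard_eq_toFinset_card _ (hNfin w).diff]
            refine le_trans (Finset.le_card_sdiff _ _) (le_of_eq ?_)
            congr 1
            ext x
            simp
      _ ≤ (C w).ncard := Set.ncard_le_ncard hsub (hCfin w)
  -- the union set is finite
  have hBfin : (extBoundary G W).Finite := by
    refine (hWfin.biUnion (fun w _ => hNfin w)).subset ?_
    rintro v ⟨-, w, hw, hadj⟩
    exact Set.mem_biUnion hw hadj.symm
  have hFfin : (W ∪ extBoundary G W).Finite := hWfin.union hBfin
  -- Finset versions
  set Wf : Finset V := hWfin.toFinset with hWf
  set Ff : Finset V := hFfin.toFinset with hFf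
  set cf : V → Finset V := fun w => (hCfin w).toFinset with hcf
  have hdisj : ∀ w ∈ Wf, ∀ w' ∈ Wf, w ≠ w' → Disjoint (cf w) (cf w') := by
    intro w _ w' _ hne
    rw [Finset.disjoint_left]
    intro v hv hv'
    simp only [hcf, Set.Finite.mem_toFinset] at hv hv'
    exact hne (hv.2.symm.trans hv'.2)
  have hsubF : ∀ w ∈ Wf, cf w ⊆ Ff := by
    intro w hw v hv
    simp only [hcf, Set.Finite.mem_toFinset] at hv
    simp only [hFf, Set.Finite.mem_toFinset]
    by_cases hvW : v ∈ W
    · exact Or.inl hvW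
    · exact Or.inr ⟨hvW, w, by simpa [hWf, Set.Finite.mem_toFinset] using hw, hv.1.symm⟩
  calc (d - 1) * W.ncard = ∑ _w ∈ Wf, (d - 1) := by
        rw [Finset.sum_const, smul_eq_mul, mul_comm,
          Set.ncard_eq_toFinset_card _ hWfin]
    _ ≤ ∑ w ∈ Wf, (cf w).card := Finset.sum_le_sum (fun w _ => by
        simpa [hcf, Set.ncard_eq_toFinset_card _ (hCfin w)] using hCcard w)
    _ = (Wf.biUnion cf).card := (Finset.card_biUnion hdisj).symm
    _ ≤ Ff.card := Finset.card_le_card (fun v hv => by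
        obtain ⟨w, hw, hv⟩ := Finset.mem_biUnion.mp hv
        exact hsubF w hw hv)
    _ = (W ∪ extBoundary G W).ncard := (Set.ncard_eq_toFinset_card _ hFfin).symm
end

section
/- For every integer d ≥ 3 and every δ ∈ (0, d−2), there exists c = c(d, δ) > 0 such that for all ε ∈ (0, c), (d−2)·h(ε) > d·ε + d·h( (d−2−δ)·ε / (d·(1−ε)) ). (This is the analytic core of the paper's theorem that trees satisfy 'Sparse implies Thin': the final entropy inequality chain from the star–vertex entropy inequality, rearranged to δ·ε·log(1/ε) ≤ O_d(ε), cannot hold for arbitrarily small ε.) -/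
/-!
With `L = log ε⁻¹` and `A = d - 2 - δ`, the left side is at least `(A + δ) ε L`, since
`h ε ≥ ε L`. On the right, `h t ≤ t (log t⁻¹ + 1)` at `t = A ε / (d (1 - ε))` gives
`d h t ≤ A ε (L + O(1)) / (1 - ε)`, so the right side is `A ε L + O(ε)`. The surplus `δ ε L`
beats the `O(ε)` error once `L` is large, i.e. once `ε` is small.
-/

open Real Filter Topology

namespace Real

lemma mul_log_inv_le_binEntropy {p : ℝ} (hp₀ : 0 ≤ p) (hp₁ : p ≤ 1) :
    p * log p⁻¹ ≤ binEntropy p := by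
  have h := negMulLog_nonneg (sub_nonneg.2 hp₁) (by linarith : 1 - p ≤ 1)
  rw [negMulLog, neg_mul, ← mul_neg, ← log_inv] at h
  rw [binEntropy]
  linarith

lemma binEntropy_le_mul_log_inv_add_one {p : ℝ} (hp₁ : p ≤ 1) :
    binEntropy p ≤ p * (log p⁻¹ + 1) := by
  have h := negMulLog_le_one_sub_self (sub_nonneg.2 hp₁)
  rw [negMulLog, neg_mul, ← mul_neg, ← log_inv] at h
  rw [binEntropy]
  linarith

lemma mul_binEntropy_div_le {A D ε : ℝ} (hA : 0 < A) (hD : 0 < D) (hε₀ : 0 < ε) (hε₁ : ε < 1)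
    (hAε : A * ε ≤ D * (1 - ε)) :
    D * binEntropy (A * ε / (D * (1 - ε))) ≤
      A * ε / (1 - ε) * (log ε⁻¹ + log (D / A) + 1) := by
  have h1ε : 0 < 1 - ε := by linarith
  set t := A * ε / (D * (1 - ε)) with ht
  have ht₀ : 0 < t := by positivity
  have ht₁ : t ≤ 1 := by rw [ht, div_le_one (by positivity)]; exact hAε
  have hDt : D * t = A * ε / (1 - ε) := by rw [ht]; field_simp
  have hlog : log t⁻¹ ≤ log ε⁻¹ + log (D / A) := by
    have hinv : t⁻¹ ≤ ε⁻¹ * (D / A) := by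
      rw [ht, inv_div, div_le_iff₀ (by positivity)]
      field_simp
      nlinarith
    calc log t⁻¹ ≤ log (ε⁻¹ * (D / A)) := log_le_log (by positivity) hinv
      _ = log ε⁻¹ + log (D / A) := log_mul (by positivity) (by positivity)
  calc D * binEntropy t ≤ D * (t * (log t⁻¹ + 1)) :=
        mul_le_mul_of_nonneg_left (binEntropy_le_mul_log_inv_add_one ht₁) hD.le
    _ = D * t * (log t⁻¹ + 1) := by ring
    _ ≤ A * ε / (1 - ε) * (log ε⁻¹ + log (D / A) + 1) := by
        rw [hDt]; gcongr

end Real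

lemma binEntropy_gap_of_log_inv_gt {D δ ε : ℝ} (hδ : 0 < δ) (hδD : δ < D - 2) (hε : 0 < ε)
    (hεδ : 2 * D * ε ≤ δ)
    (hL : 2 * (D + (D - 2 - δ) * (log (D / (D - 2 - δ)) + 1)) < δ * log ε⁻¹) :
    D * ε + D * binEntropy ((D - 2 - δ) * ε / (D * (1 - ε))) < (D - 2) * binEntropy ε := by
  set A := D - 2 - δ
  set L := log ε⁻¹
  set C := log (D / A) + 1
  have hA₀ : 0 < A := by linarith
  have hε₁ : ε < 1 / 2 := by nlinarith
  have hC : 0 < C := by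
    have : 1 ≤ D / A := (one_le_div hA₀).2 (by linarith)
    linarith [log_nonneg this]
  have hL₀ : 0 < L := by nlinarith
  have h1ε : 0 < 1 - ε := by linarith
  have hlower : ε * L ≤ binEntropy ε := mul_log_inv_le_binEntropy hε.le (by linarith)
  have hupper : D * binEntropy (A * ε / (D * (1 - ε))) ≤ A * ε / (1 - ε) * (L + C) := by
    rw [← add_assoc]
    exact mul_binEntropy_div_le hA₀ (by linarith) hε (by linarith) (by nlinarith)
  have hdiscount : A + δ / 2 ≤ (A + δ) * (1 - ε) := by nlinarith
  have hkey : A * (L + C) < ((A + δ) * L - D) * (1 - ε) := by nlinarith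
  have hsurplus : A * ε / (1 - ε) * (L + C) < ε * ((A + δ) * L - D) := by
    rw [div_mul_eq_mul_div, div_lt_iff₀ h1ε]
    nlinarith [mul_lt_mul_of_pos_left hkey hε]
  calc D * ε + D * binEntropy (A * ε / (D * (1 - ε)))
      < D * ε + ε * ((A + δ) * L - D) := by linarith
    _ = (A + δ) * (ε * L) := by ring
    _ ≤ (D - 2) * binEntropy ε := by
        rw [show A + δ = D - 2 by ring]
        exact mul_le_mul_of_nonneg_left hlower (by linarith)

lemma eventually_binEntropy_gap {D δ : ℝ} (hδ : 0 < δ) (hδD : δ < D - 2) :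
    ∀ᶠ ε in 𝓝[>] 0,
      D * ε + D * binEntropy ((D - 2 - δ) * ε / (D * (1 - ε))) < (D - 2) * binEntropy ε := by
  have hlog : Tendsto (fun ε : ℝ ↦ δ * log ε⁻¹) (𝓝[>] 0) atTop := by
    refine Tendsto.const_mul_atTop hδ ?_
    exact (tendsto_neg_atBot_atTop.comp tendsto_log_nhdsGT_zero).congr fun ε ↦ (log_inv ε).symm
  have hsmall : ∀ᶠ ε in 𝓝[>] (0 : ℝ), 2 * D * ε < δ := by
    have : Tendsto (fun ε : ℝ ↦ 2 * D * ε) (𝓝[>] 0) (𝓝 0) :=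
      ((continuous_const_mul (2 * D)).tendsto' 0 0 (mul_zero _)).mono_left nhdsWithin_le_nhds
    exact this.eventually (eventually_lt_nhds hδ)
  filter_upwards [self_mem_nhdsWithin, hsmall, hlog.eventually_gt_atTop _]
    with ε hε hεδ hL
  exact binEntropy_gap_of_log_inv_gt hδ hδD hε hεδ.le hL

theorem stmt_7_general (d : ℕ) (δ : ℝ) (hδ : δ ∈ Set.Ioo 0 ((d : ℝ) - 2)) :
    ∃ c > (0 : ℝ), ∀ ε ∈ Set.Ioo (0 : ℝ) c,
      ((d : ℝ) - 2) * Real.binEntropy ε >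
        d * ε + d * Real.binEntropy (((d : ℝ) - 2 - δ) * ε / (d * (1 - ε))) := by
  obtain ⟨c, hc, hgap⟩ :=
    (nhdsGT_basis (0 : ℝ)).eventually_iff.1 (eventually_binEntropy_gap hδ.1 hδ.2)
  exact ⟨c, hc, fun ε hε ↦ hgap hε⟩

/-- Analytic core of 'Trees satisfy Sparse implies Thin': for every integer
`d ≥ 3` and `δ ∈ (0, d−2)`, there is `c > 0` such that for all `ε ∈ (0, c)`,
`(d−2)·h(ε) > d·ε + d·h((d−2−δ)·ε / (d·(1−ε)))`, with `h` binary entropy. -/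
theorem stmt_7 (d : ℕ) (hd : 3 ≤ d) (δ : ℝ) (hδ : δ ∈ Set.Ioo 0 ((d : ℝ) - 2)) :
    ∃ c > (0 : ℝ), ∀ ε ∈ Set.Ioo (0 : ℝ) c,
      ((d : ℝ) - 2) * Real.binEntropy ε >
        d * ε + d * Real.binEntropy (((d : ℝ) - 2 - δ) * ε / (d * (1 - ε))) :=
  stmt_7_general d δ hδ
end

section
/- For every integer d ≥ 3, every γ > 0, and every ε₀ ∈ (0,1), there exists δ₀ > 0 such that for all δ ∈ (0, δ₀) and all ε ∈ [ε₀, 1), γ·h(ε) > (1−ε)·d·h(δ) + ε·d·h( δ·(1−ε)/ε ). (This is the analytic core of the paper's theorem that large degree implies high density: the entropy inequality chain derived from the star–vertex entropy inequality on a graph with external vertex Cheeger constant γ cannot hold with small δ unless ε is small.) -/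
private lemma binEntropy_le_aux {x : ℝ} (hx0 : 0 ≤ x) (hx1 : x < 1) :
    Real.binEntropy x ≤ x - x * Real.log x := by
  rw [Real.binEntropy]
  have h1x : (0:ℝ) < 1 - x := by linarith
  have h2 : Real.log (1-x)⁻¹ ≤ (1-x)⁻¹ - 1 :=
    Real.log_le_sub_one_of_pos (inv_pos.2 h1x)
  have h4 : (1-x) * ((1-x)⁻¹ - 1) = x := by field_simp; ring
  have h3 : (1-x) * Real.log (1-x)⁻¹ ≤ x := by
    calc (1-x) * Real.log (1-x)⁻¹ ≤ (1-x) * ((1-x)⁻¹ - 1) :=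
          mul_le_mul_of_nonneg_left h2 h1x.le
      _ = x := h4
  rw [Real.log_inv]
  nlinarith

/-- Analytic core of 'Large degree implies high density': for every integer
`d ≥ 3`, `γ > 0` and `ε₀ ∈ (0,1)`, there is `δ₀ > 0` such that for all
`δ ∈ (0, δ₀)` and `ε ∈ [ε₀, 1)`,
`γ·h(ε) > (1−ε)·d·h(δ) + ε·d·h(δ·(1−ε)/ε)`, with `h` binary entropy. -/
theorem stmt_8 (d : ℕ) (hd : 3 ≤ d) (γ : ℝ) (hγ : 0 < γ)
    (ε₀ : ℝ) (hε₀ : ε₀ ∈ Set.Ioo (0 : ℝ) 1) :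
    ∃ δ₀ > (0 : ℝ), ∀ δ ∈ Set.Ioo (0 : ℝ) δ₀, ∀ ε ∈ Set.Ico ε₀ (1 : ℝ),
      γ * Real.binEntropy ε >
        (1 - ε) * d * Real.binEntropy δ + ε * d * Real.binEntropy (δ * (1 - ε) / ε) := by
  obtain ⟨hε₀0, hε₀1⟩ := hε₀
  have hd0 : (0:ℝ) < (d:ℝ) := by exact_mod_cast lt_of_lt_of_le (by norm_num) hd
  set c : ℝ := -Real.log (1 - ε₀) with hc_def
  have hc : 0 < c := by
    have h := Real.log_neg (by linarith : (0:ℝ) < 1 - ε₀) (by linarith)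
    have hce : c = -Real.log (1 - ε₀) := hc_def
    linarith
  have hcont : Filter.Tendsto (fun x : ℝ => x * Real.log x) (nhds 0) (nhds 0) := by
    have := Real.continuous_mul_log.tendsto 0
    simpa using this
  have hpos : 0 < γ * c / (8 * (d:ℝ)) := by positivity
  have hsmall : ∀ᶠ x in nhds (0:ℝ), dist (x * Real.log x) 0 < γ * c / (8 * d) :=
    Metric.tendsto_nhds.mp hcont _ hpos
  rw [Metric.eventually_nhds_iff] at hsmall
  obtain ⟨r, hr, hrs⟩ := hsmall
  refine ⟨min (min r (γ * c / (8 * d))) (min (γ / (2 * d)) ε₀), by positivity, ?_⟩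
  rintro δ ⟨hδ0, hδlt⟩ ε ⟨hεlb, hε1⟩
  have hδr : δ < r := lt_of_lt_of_le hδlt (le_trans (min_le_left _ _) (min_le_left _ _))
  have hδ8 : δ < γ * c / (8 * d) :=
    lt_of_lt_of_le hδlt (le_trans (min_le_left _ _) (min_le_right _ _))
  have hδ2 : δ < γ / (2 * d) :=
    lt_of_lt_of_le hδlt (le_trans (min_le_right _ _) (min_le_left _ _))
  have hδε₀ : δ < ε₀ :=
    lt_of_lt_of_le hδlt (le_trans (min_le_right _ _) (min_le_right _ _))
  have hε0 : 0 < ε := lt_of_lt_of_le hε₀0 hεlb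
  have hδ1 : δ < 1 := hδε₀.trans hε₀1
  set t : ℝ := 1 - ε with ht_def
  have ht0 : 0 < t := by rw [ht_def]; linarith
  have ht1 : t ≤ 1 - ε₀ := by rw [ht_def]; linarith
  set u : ℝ := δ * t / ε with hu_def
  have hu0 : 0 < u := by positivity
  have hu1 : u < 1 := by
    rw [hu_def, div_lt_one hε0]
    calc δ * t ≤ δ * 1 := by nlinarith
      _ = δ := mul_one δ
      _ < ε₀ := hδε₀
      _ ≤ ε := hεlb
  have hεu : ε * u = δ * t := by rw [hu_def]; field_simp
  set L : ℝ := -Real.log t with hL_def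
  have hL : c ≤ L := by
    have h := Real.log_le_log ht0 ht1
    have hce : c = -Real.log (1 - ε₀) := hc_def
    have hLe : L = -Real.log t := hL_def
    linarith
  have hLpos : 0 < L := lt_of_lt_of_le hc hL
  -- lower bound on binEntropy ε
  have hlb : t * L ≤ Real.binEntropy ε := by
    rw [Real.binEntropy]
    have h1 : 0 ≤ ε * Real.log ε⁻¹ := by
      apply mul_nonneg hε0.le
      rw [Real.log_inv]
      have : Real.log ε ≤ 0 := Real.log_nonpos hε0.le hε1.le
      linarith
    have h2 : (1 - ε) * Real.log (1 - ε)⁻¹ = t * L := by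
      rw [Real.log_inv, hL_def, ht_def]
    linarith
  -- upper bounds on RHS
  have hbδ : Real.binEntropy δ ≤ δ - δ * Real.log δ := binEntropy_le_aux hδ0.le hδ1
  have hbu : Real.binEntropy u ≤ u - u * Real.log u := binEntropy_le_aux hu0.le hu1
  have hlogu : Real.log u = Real.log δ + Real.log t - Real.log ε := by
    rw [hu_def, Real.log_div (by positivity) hε0.ne', Real.log_mul hδ0.ne' ht0.ne']
  have hlogε : Real.log ε ≤ 0 := Real.log_nonpos hε0.le hε1.le
  have hR1 : t * d * Real.binEntropy δ ≤ d * δ * t * (1 - Real.log δ) := by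
    have h := mul_le_mul_of_nonneg_left hbδ (by positivity : (0:ℝ) ≤ t * d)
    nlinarith
  have hR2 : ε * d * Real.binEntropy u ≤ d * δ * t * (1 - Real.log δ + L) := by
    have h1 : ε * d * Real.binEntropy u ≤ ε * d * (u - u * Real.log u) :=
      mul_le_mul_of_nonneg_left hbu (by positivity)
    have h2 : ε * d * (u - u * Real.log u) = d * δ * t * (1 - Real.log u) := by
      calc ε * d * (u - u * Real.log u)
          = (d:ℝ) * (ε * u) - d * (ε * u) * Real.log u := by ring
        _ = (d:ℝ) * (δ * t) - d * (δ * t) * Real.log u := by rw [hεu]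
        _ = (d:ℝ) * δ * t * (1 - Real.log u) := by ring
    have h3 : -Real.log u ≤ -Real.log δ + L := by
      rw [hlogu, hL_def]; linarith
    have h4 : d * δ * t * (1 - Real.log u) ≤ d * δ * t * (1 - Real.log δ + L) := by
      apply mul_le_mul_of_nonneg_left _ (by positivity)
      linarith
    linarith
  -- key strict inequality
  clear_value c t u L
  have hdδ : (d:ℝ) * δ < γ / 2 := by
    calc (d:ℝ) * δ < (d:ℝ) * (γ / (2 * d)) := mul_lt_mul_of_pos_left hδ2 hd0
      _ = γ / 2 := by field_simp
  have hδlog : |δ * Real.log δ| < γ * c / (8 * d) := by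
    have h := hrs (y := δ) (by rw [Real.dist_eq, sub_zero, abs_of_pos hδ0]; exact hδr)
    rwa [Real.dist_eq, sub_zero] at h
  have heq8 : (d:ℝ) * (γ * c / (8 * d)) = γ * c / 8 := by field_simp
  have hkey0 : (d:ℝ) * δ * (2 - 2 * Real.log δ) < γ * c / 2 := by
    have hab := abs_lt.mp hδlog
    have h1 : (d:ℝ) * (-(γ * c / (8 * d))) < d * (δ * Real.log δ) :=
      mul_lt_mul_of_pos_left hab.1 hd0
    have h1' : -(γ * c / 8) < (d:ℝ) * (δ * Real.log δ) := by
      rw [mul_neg, heq8] at h1; exact h1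
    have h3 : (d:ℝ) * δ < γ * c / 8 := by
      calc (d:ℝ) * δ < (d:ℝ) * (γ * c / (8 * d)) := mul_lt_mul_of_pos_left hδ8 hd0
        _ = γ * c / 8 := heq8
    have hre : (d:ℝ) * δ * (2 - 2 * Real.log δ)
        = 2 * ((d:ℝ) * δ) - 2 * ((d:ℝ) * (δ * Real.log δ)) := by ring
    rw [hre]; linarith
  have hkey : (d:ℝ) * δ * (2 - 2 * Real.log δ) + d * δ * L < γ * L := by
    have h4 : (γ - d * δ) * c ≤ (γ - d * δ) * L :=
      mul_le_mul_of_nonneg_left hL (by linarith)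
    have h5 : 0 < (γ / 2 - d * δ) * c := mul_pos (by linarith) hc
    linarith [h4, h5, hkey0]
  -- assemble
  have hmain : t * ((d:ℝ) * δ * (2 - 2 * Real.log δ) + d * δ * L) < t * (γ * L) :=
    mul_lt_mul_of_pos_left hkey ht0
  have hRHS : t * d * Real.binEntropy δ + ε * d * Real.binEntropy u
      ≤ t * ((d:ℝ) * δ * (2 - 2 * Real.log δ) + d * δ * L) := by linarith [hR1, hR2]
  have hLHS : t * (γ * L) ≤ γ * Real.binEntropy ε := by
    linarith [mul_le_mul_of_nonneg_left hlb hγ.le]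
  show γ * Real.binEntropy ε > t * d * Real.binEntropy δ + ε * d * Real.binEntropy u
  linarith
end

section
/- Let d ≥ 1 and let X₀, X₁, …, X_d be Boolean-valued random variables on a probability space with p = P(X₀ = true) ∈ (0,1), and let κ = (1/d)·Σᵢ₌₁^d P(Xᵢ = true | X₀ = false). Then the Shannon entropy of the joint tuple satisfies H[(X₀, X₁, …, X_d)] ≤ H[X₀] + p·d·log 2 + (1−p)·d·h(κ). (This combines the chain rule decomposition (e.star), the conditional split (e.emptystar), the trivial bound H ≤ d·log 2 on {0,1}^d, and the subadditivity-plus-concavity bound (e.sigmaent) from the paper's proof of 'Trees satisfy SiT'.) -/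
open MeasureTheory ProbabilityTheory

/-- Shannon entropy (natural logarithm) of a random variable with values in a
finite type: `H[X] = ∑ₓ −P(X = x)·log P(X = x)`. -/
noncomputable def shannonEntropy {Ω : Type*} [MeasurableSpace Ω] {S : Type*} [Fintype S]
    (μ : Measure Ω) (X : Ω → S) : ℝ :=
  ∑ s : S, Real.negMulLog (μ (X ⁻¹' {s})).toReal

namespace Stmt9Aux

open Finset Real

/-- Max-entropy bound. -/
lemma sum_negMulLog_le_log_card {S : Type*} [Fintype S] [Nonempty S] {q : S → ℝ}
    (hq0 : ∀ s, 0 ≤ q s) (hq1 : ∑ s, q s = 1) :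
    ∑ s, Real.negMulLog (q s) ≤ Real.log (Fintype.card S) := by
  set n : ℕ := Fintype.card S with hn
  have hn0 : 0 < (n : ℝ) := by exact_mod_cast Fintype.card_pos
  have jensen := Real.concaveOn_negMulLog.le_map_sum (t := (univ : Finset S))
    (w := fun _ : S => (n : ℝ)⁻¹) (p := q)
    (fun i _ => by positivity)
    (by simp [Finset.card_univ, ← hn, mul_comm, mul_inv_cancel₀ hn0.ne'])
    (fun i _ => hq0 i)
  have hsum : ∑ s : S, (n : ℝ)⁻¹ • q s = (n : ℝ)⁻¹ := by
    simp [← Finset.mul_sum, hq1, smul_eq_mul]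
  rw [hsum] at jensen
  have : negMulLog ((n:ℝ)⁻¹) = (n:ℝ)⁻¹ * Real.log n := by
    simp [Real.negMulLog, Real.log_inv]
  rw [this] at jensen
  calc ∑ s, negMulLog (q s) = (n:ℝ) * ∑ s : S, (n : ℝ)⁻¹ • negMulLog (q s) := by
        simp only [smul_eq_mul, ← Finset.mul_sum, ← mul_assoc,
          mul_inv_cancel₀ hn0.ne', one_mul]
    _ ≤ (n:ℝ) * ((n:ℝ)⁻¹ * Real.log n) := by
        apply mul_le_mul_of_nonneg_left jensen hn0.le
    _ = Real.log n := by field_simp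

/-- Subadditivity of entropy for a distribution on `ι → Bool`. -/
lemma sum_negMulLog_le_sum_binEntropy {ι : Type*} [Fintype ι] [DecidableEq ι]
    {q : (ι → Bool) → ℝ} (hq0 : ∀ f, 0 ≤ q f) (hq1 : ∑ f, q f = 1) :
    ∑ f, negMulLog (q f) ≤
      ∑ i, (negMulLog (∑ f ∈ univ.filter (fun f => f i = true), q f)
        + negMulLog (∑ f ∈ univ.filter (fun f => f i = false), q f)) := by
  classical
  set m : ι → Bool → ℝ := fun i b => ∑ f ∈ univ.filter (fun f => f i = b), q f with hm
  have hm0 : ∀ i b, 0 ≤ m i b := fun i b => Finset.sum_nonneg fun f _ => hq0 f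
  have hmsum : ∀ i, m i true + m i false = 1 := by
    intro i
    have := Finset.sum_fiberwise (univ : Finset (ι → Bool)) (fun f => f i) q
    rw [Fintype.sum_bool] at this
    rw [this] at *
    exact hq1 ▸ this
  set T : Finset (ι → Bool) := univ.filter (fun f => q f ≠ 0) with hT
  have hqT : ∀ f ∈ T, 0 < q f := by
    intro f hf
    rcases (hq0 f).lt_or_eq with h | h
    · exact h
    · exact absurd h.symm (Finset.mem_filter.1 hf).2
  have hsumT : ∑ f ∈ T, q f = 1 := by
    rw [hT, Finset.sum_filter_ne_zero, hq1]
  have hmf : ∀ f ∈ T, ∀ i, 0 < m i (f i) := by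
    intro f hf i
    refine lt_of_lt_of_le (hqT f hf) ?_
    exact Finset.single_le_sum (fun g _ => hq0 g)
      (Finset.mem_filter.2 ⟨Finset.mem_univ f, rfl⟩)
  set g : (ι → Bool) → ℝ := fun f => ∏ i, m i (f i) with hg
  have hgpos : ∀ f ∈ T, 0 < g f := fun f hf => Finset.prod_pos fun i _ => hmf f hf i
  -- Jensen
  have jensen := (strictConcaveOn_log_Ioi.concaveOn).le_map_sum (t := T) (w := q)
    (p := fun f => g f / q f)
    (fun f hf => (hqT f hf).le) hsumT
    (fun f hf => Set.mem_Ioi.2 (div_pos (hgpos f hf) (hqT f hf)))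
  -- RHS of Jensen ≤ 0
  have hRsum : ∑ f ∈ T, q f • (g f / q f) = ∑ f ∈ T, g f := by
    refine Finset.sum_congr rfl fun f hf => ?_
    rw [smul_eq_mul, mul_div_cancel₀ _ (hqT f hf).ne']
  have hgsum1 : ∑ f : ι → Bool, g f = 1 := by
    have := Finset.prod_univ_sum (fun _ : ι => (univ : Finset Bool)) m
    rw [Fintype.piFinset_univ] at this
    rw [hg, ← this]
    refine Finset.prod_eq_one fun i _ => ?_
    rw [Fintype.sum_bool, hmsum i]
  have hRle : ∑ f ∈ T, g f ≤ 1 := by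
    rw [← hgsum1]
    refine Finset.sum_le_sum_of_subset_of_nonneg (Finset.filter_subset _ _)
      (fun f _ _ => Finset.prod_nonneg fun i _ => hm0 i (f i))
  have hlog0 : Real.log (∑ f ∈ T, q f • (g f / q f)) ≤ 0 := by
    rw [hRsum]
    exact Real.log_nonpos (Finset.sum_nonneg fun f hf => (hgpos f hf).le) hRle
  have key : ∑ f ∈ T, q f • Real.log (g f / q f) ≤ 0 := jensen.trans hlog0
  -- rewrite LHS of Jensen
  have hLHS : ∑ f ∈ T, q f • Real.log (g f / q f)
      = ∑ f, (∑ i, q f * Real.log (m i (f i))) + ∑ f, negMulLog (q f) := by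
    have step1 : ∀ f ∈ T, q f • Real.log (g f / q f)
        = (∑ i, q f * Real.log (m i (f i))) + negMulLog (q f) := by
      intro f hf
      rw [smul_eq_mul, Real.log_div (hgpos f hf).ne' (hqT f hf).ne',
        mul_sub, Real.negMulLog, hg,
        Real.log_prod (fun i _ => (hmf f hf i).ne'), Finset.mul_sum]
      ring
    rw [Finset.sum_congr rfl step1, Finset.sum_add_distrib]
    congr 1
    · refine Finset.sum_subset (Finset.filter_subset _ _) fun f _ hf => ?_
      have : q f = 0 := by
        by_contra h
        exact hf (Finset.mem_filter.2 ⟨Finset.mem_univ f, h⟩)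
      simp [this]
    · refine Finset.sum_subset (Finset.filter_subset _ _) fun f _ hf => ?_
      have : q f = 0 := by
        by_contra h
        exact hf (Finset.mem_filter.2 ⟨Finset.mem_univ f, h⟩)
      simp [this]
  -- marginalize
  have hmarg : ∑ f, (∑ i, q f * Real.log (m i (f i)))
      = -∑ i, (negMulLog (m i true) + negMulLog (m i false)) := by
    rw [Finset.sum_comm, ← Finset.sum_neg_distrib]
    refine Finset.sum_congr rfl fun i _ => ?_
    have fib := Finset.sum_fiberwise (univ : Finset (ι → Bool)) (fun f => f i)
      (fun f => q f * Real.log (m i (f i)))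
    rw [← fib, Fintype.sum_bool]
    have h1 : ∀ b : Bool, ∑ f ∈ univ.filter (fun f => f i = b), q f * Real.log (m i (f i))
        = m i b * Real.log (m i b) := by
      intro b
      rw [hm, Finset.sum_mul]
      refine Finset.sum_congr rfl fun f hf => ?_
      rw [(Finset.mem_filter.1 hf).2]
    rw [h1 true, h1 false, Real.negMulLog, Real.negMulLog]
    ring
  rw [hLHS, hmarg] at key
  linarith

/-- Measure of a finset preimage as a real sum. -/
lemma toReal_measure_preimage_finset {Ω : Type*} [MeasurableSpace Ω] (μ : Measure Ω)
    [IsProbabilityMeasure μ] {S : Type*} {Y : Ω → S}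
    (hY : ∀ s : S, MeasurableSet (Y ⁻¹' {s})) (F : Finset S) :
    (μ (Y ⁻¹' ↑F)).toReal = ∑ s ∈ F, (μ (Y ⁻¹' {s})).toReal := by
  rw [← MeasureTheory.sum_measure_preimage_singleton F (fun s _ => hY s),
    ENNReal.toReal_sum (fun s _ => measure_ne_top μ _)]

end Stmt9Aux

/-- Chain-rule bound: for Boolean random variables `X₀, X₁, …, X_d` with
`p = P(X₀ = true) ∈ (0,1)` and `κ = (1/d)·Σᵢ P(Xᵢ = true | X₀ = false)`,
the joint entropy satisfies
`H[(X₀, X₁, …, X_d)] ≤ H[X₀] + p·d·log 2 + (1−p)·d·h(κ)`. -/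
theorem stmt_9 {Ω : Type*} [MeasurableSpace Ω] (μ : Measure Ω) [IsProbabilityMeasure μ]
    (d : ℕ) (hd : 1 ≤ d) (X₀ : Ω → Bool) (X : Fin d → Ω → Bool)
    (hX₀ : Measurable X₀) (hX : ∀ i, Measurable (X i))
    (p : ℝ) (hp : p = (μ (X₀ ⁻¹' {true})).toReal) (hp' : p ∈ Set.Ioo (0 : ℝ) 1)
    (κ : ℝ)
    (hκ : κ = (1 / d) * ∑ i, ((μ[|X₀ ⁻¹' {false}]) (X i ⁻¹' {true})).toReal) :
    shannonEntropy μ (fun ω => (X₀ ω, fun i => X i ω))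
      ≤ shannonEntropy μ X₀ + p * d * Real.log 2 + (1 - p) * d * Real.binEntropy κ := by
  classical
  open Finset Real Stmt9Aux in
  obtain ⟨hp0, hp1⟩ := hp'
  have hd0 : 0 < (d : ℝ) := by exact_mod_cast hd
  set Y : Ω → Bool × (Fin d → Bool) := fun ω => (X₀ ω, fun i => X i ω) with hY
  have hYm : Measurable Y := hX₀.prodMk (measurable_pi_lambda _ hX)
  have hYs : ∀ s : Bool × (Fin d → Bool), MeasurableSet (Y ⁻¹' {s}) :=
    fun s => hYm (measurableSet_singleton s)
  set q : Bool × (Fin d → Bool) → ℝ := fun s => (μ (Y ⁻¹' {s})).toReal with hq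
  have hq0 : ∀ s, 0 ≤ q s := fun s => ENNReal.toReal_nonneg
  have hq1 : ∑ s, q s = 1 := by
    have h := toReal_measure_preimage_finset μ hYs (univ : Finset (Bool × (Fin d → Bool)))
    rw [Finset.coe_univ, Set.preimage_univ] at h
    simpa using h.symm
  -- marginals in the first coordinate
  have hmargb : ∀ b : Bool, (μ (X₀ ⁻¹' {b})).toReal = ∑ f, q (b, f) := by
    intro b
    have h := toReal_measure_preimage_finset μ hYs
      (({b} : Finset Bool) ×ˢ (univ : Finset (Fin d → Bool)))
    have hset : Y ⁻¹' ↑(({b} : Finset Bool) ×ˢ (univ : Finset (Fin d → Bool)))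
        = X₀ ⁻¹' {b} := by
      ext ω; simp [hY, eq_comm]
    rw [hset, Finset.sum_product, Finset.sum_singleton] at h
    exact h
  have hX₀s : ∀ b : Bool, MeasurableSet (X₀ ⁻¹' {b}) :=
    fun b => hX₀ (measurableSet_singleton b)
  have hpq : p = ∑ f, q (true, f) := by rw [hp, hmargb true]
  have hfalse : (μ (X₀ ⁻¹' {false})).toReal = 1 - p := by
    have h := toReal_measure_preimage_finset μ hX₀s (univ : Finset Bool)
    rw [Finset.coe_univ, Set.preimage_univ, measure_univ] at h
    rw [Fintype.sum_bool, ← hp] at h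
    simp at h
    linarith
  have hpfq : 1 - p = ∑ f, q (false, f) := by rw [← hfalse, hmargb false]
  have hp0' : p ≠ 0 := hp0.ne'
  have hpf0 : (0:ℝ) < 1 - p := by linarith
  have hpf0' : (1:ℝ) - p ≠ 0 := hpf0.ne'
  -- conditional distributions
  set rt : (Fin d → Bool) → ℝ := fun f => q (true, f) / p with hrt
  set rf : (Fin d → Bool) → ℝ := fun f => q (false, f) / (1 - p) with hrf
  have hrt0 : ∀ f, 0 ≤ rt f := fun f => div_nonneg (hq0 _) hp0.le
  have hrf0 : ∀ f, 0 ≤ rf f := fun f => div_nonneg (hq0 _) hpf0.le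
  have hrt1 : ∑ f, rt f = 1 := by
    rw [hrt]; rw [← Finset.sum_div, ← hpq, div_self hp0']
  have hrf1 : ∑ f, rf f = 1 := by
    rw [hrf]; rw [← Finset.sum_div, ← hpfq, div_self hpf0']
  -- chain rule (exact)
  have hqt : ∀ f, q (true, f) = p * rt f := fun f => by
    rw [hrt]; field_simp
  have hqf : ∀ f, q (false, f) = (1 - p) * rf f := fun f => by
    rw [hrf]; field_simp
  have hchain : shannonEntropy μ Y
      = negMulLog p + negMulLog (1 - p)
        + p * ∑ f, negMulLog (rt f) + (1 - p) * ∑ f, negMulLog (rf f) := by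
    have : shannonEntropy μ Y = ∑ s, negMulLog (q s) := rfl
    rw [this, Fintype.sum_prod_type, Fintype.sum_bool]
    have ht : ∑ f, negMulLog (q (true, f))
        = negMulLog p + p * ∑ f, negMulLog (rt f) := by
      have : ∀ f, negMulLog (q (true, f))
          = rt f * negMulLog p + p * negMulLog (rt f) := by
        intro f; rw [hqt f, Real.negMulLog_mul]
      rw [Finset.sum_congr rfl fun f _ => this f, Finset.sum_add_distrib,
        ← Finset.sum_mul, hrt1, one_mul, ← Finset.mul_sum]
    have hf : ∑ f, negMulLog (q (false, f))
        = negMulLog (1 - p) + (1 - p) * ∑ f, negMulLog (rf f) := by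
      have : ∀ f, negMulLog (q (false, f))
          = rf f * negMulLog (1 - p) + (1 - p) * negMulLog (rf f) := by
        intro f; rw [hqf f, Real.negMulLog_mul]
      rw [Finset.sum_congr rfl fun f _ => this f, Finset.sum_add_distrib,
        ← Finset.sum_mul, hrf1, one_mul, ← Finset.mul_sum]
    rw [ht, hf]; ring
  have hH0 : shannonEntropy μ X₀ = negMulLog p + negMulLog (1 - p) := by
    have : shannonEntropy μ X₀
        = negMulLog ((μ (X₀ ⁻¹' {true})).toReal) + negMulLog ((μ (X₀ ⁻¹' {false})).toReal) := by
      rw [shannonEntropy, Fintype.sum_bool]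
    rw [this, ← hp, hfalse]
  -- bound on the `true` branch
  have hHt : ∑ f, negMulLog (rt f) ≤ d * Real.log 2 := by
    have h := sum_negMulLog_le_log_card hrt0 hrt1
    have hcard : (Fintype.card (Fin d → Bool) : ℝ) = (2:ℝ) ^ d := by
      rw [Fintype.card_fun]; push_cast; simp
    rw [hcard] at h
    rwa [Real.log_pow] at h
  -- bound on the `false` branch
  set mt : Fin d → ℝ := fun i => ∑ f ∈ univ.filter (fun f => f i = true), rf f with hmt
  set mf : Fin d → ℝ := fun i => ∑ f ∈ univ.filter (fun f => f i = false), rf f with hmf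
  have hmtmf : ∀ i, mt i + mf i = 1 := by
    intro i
    have := Finset.sum_fiberwise (univ : Finset (Fin d → Bool)) (fun f => f i) rf
    rw [Fintype.sum_bool] at this
    rw [hmt, hmf]
    rw [this, hrf1]
  have hmt0 : ∀ i, 0 ≤ mt i := fun i => Finset.sum_nonneg fun f _ => hrf0 f
  have hmf0 : ∀ i, 0 ≤ mf i := fun i => Finset.sum_nonneg fun f _ => hrf0 f
  have hmt1 : ∀ i, mt i ≤ 1 := fun i => by have := hmtmf i; have := hmf0 i; linarith
  have hHf : ∑ f, negMulLog (rf f) ≤ ∑ i, Real.binEntropy (mt i) := by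
    have h := sum_negMulLog_le_sum_binEntropy hrf0 hrf1
    refine h.trans (le_of_eq ?_)
    refine Finset.sum_congr rfl fun i _ => ?_
    rw [Real.binEntropy_eq_negMulLog_add_negMulLog_one_sub]
    have : 1 - mt i = mf i := by have := hmtmf i; linarith
    rw [this]
  -- identify κ
  have hκi : ∀ i, ((μ[|X₀ ⁻¹' {false}]) (X i ⁻¹' {true})).toReal = mt i := by
    intro i
    rw [ProbabilityTheory.cond_apply (hX₀s false) μ (X i ⁻¹' {true}),
      ENNReal.toReal_mul, ENNReal.toReal_inv, hfalse]
    have hset : X₀ ⁻¹' {false} ∩ X i ⁻¹' {true}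
        = Y ⁻¹' ↑(({false} : Finset Bool) ×ˢ (univ.filter (fun f : Fin d → Bool => f i = true))) := by
      ext ω; simp [hY, and_comm]
    rw [hset, toReal_measure_preimage_finset μ hYs, Finset.sum_product, Finset.sum_singleton]
    simp only [hmt, hrf, hq]
    rw [Finset.mul_sum]
    exact Finset.sum_congr rfl fun f _ => inv_mul_eq_div _ _
  have hκeq : κ = (d:ℝ)⁻¹ * ∑ i, mt i := by
    rw [hκ, one_div]
    congr 1
    exact Finset.sum_congr rfl fun i _ => hκi i
  -- concavity of binEntropy
  have hbin : ∑ i, Real.binEntropy (mt i) ≤ d * Real.binEntropy κ := by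
    have jensen := (Real.strictConcave_binEntropy.concaveOn).le_map_sum
      (t := (univ : Finset (Fin d))) (w := fun _ => (d:ℝ)⁻¹) (p := mt)
      (fun i _ => by positivity)
      (by simp [Finset.card_univ, mul_inv_cancel₀ hd0.ne'])
      (fun i _ => Set.mem_Icc.2 ⟨hmt0 i, hmt1 i⟩)
    have hsum : ∑ i, (d:ℝ)⁻¹ • mt i = κ := by
      rw [hκeq, Finset.mul_sum]
      simp [smul_eq_mul]
    rw [hsum] at jensen
    calc ∑ i, Real.binEntropy (mt i)
        = (d:ℝ) * ∑ i, (d:ℝ)⁻¹ • Real.binEntropy (mt i) := by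
          simp only [smul_eq_mul, ← Finset.mul_sum, ← mul_assoc,
            mul_inv_cancel₀ hd0.ne', one_mul]
      _ ≤ (d:ℝ) * Real.binEntropy κ := mul_le_mul_of_nonneg_left jensen hd0.le
  -- assemble
  rw [hchain, hH0]
  have h1 : p * ∑ f, negMulLog (rt f) ≤ p * (d * Real.log 2) :=
    mul_le_mul_of_nonneg_left hHt hp0.le
  have h2 : (1 - p) * ∑ f, negMulLog (rf f) ≤ (1 - p) * (d * Real.binEntropy κ) :=
    mul_le_mul_of_nonneg_left (hHf.trans hbin) hpf0.le
  linarith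
end

section
/- For every integer d ≥ 3 and every δ ∈ (0, d−2], there exists c = c(d, δ) > 0 with the following property. Suppose X₀, X₁, …, X_d are Boolean-valued random variables on a probability space and ε ∈ (0,1) is such that: (i) P(Xᵢ = true) = ε for every i = 0, 1, …, d; (ii) H[(X₀, X₁, …, X_d)] ≥ (d−1)·H[X₀]; and (iii) E[ (Σᵢ₌₁^d 1{Xᵢ = true}) · 1{X₀ = true} ] ≥ (2+δ)·ε. Then ε ≥ c. (This is the paper's theorem 'Trees satisfy Sparse implies Thin', reduced to the probability-space setting: hypothesis (ii) is the star–vertex entropy inequality H(X_S) ≥ (d−1)·H(X_o) that holds for (weak) factor-of-IID processes on the d-regular tree, hypothesis (i) encodes equal marginals, and hypothesis (iii) says the conditional expected number of open neighbours of an open root is at least 2+δ; the conclusion is that the density ε is bounded below by a constant depending only on d and δ.) -/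
open MeasureTheory

/-- Gibbs' inequality / cross-entropy bound. -/
lemma gibbs_cross_entropy {A : Type*} [Fintype A] (p g : A → ℝ)
    (hp : ∀ a, 0 ≤ p a) (hg : ∀ a, 0 < g a)
    (hsum : ∑ a, g a ≤ ∑ a, p a) :
    ∑ a, Real.negMulLog (p a) ≤ ∑ a, p a * (- Real.log (g a)) := by
  have key : ∀ a, p a - g a ≤ p a * (- Real.log (g a)) - Real.negMulLog (p a) := by
    intro a
    rcases eq_or_lt_of_le (hp a) with h | h
    · simp only [← h, zero_sub, zero_mul, Real.negMulLog_zero, sub_zero]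
      linarith [(hg a).le]
    · have h1 : Real.log (g a / p a) ≤ g a / p a - 1 :=
        Real.log_le_sub_one_of_pos (div_pos (hg a) h)
      have h2 : Real.log (g a / p a) = Real.log (g a) - Real.log (p a) :=
        Real.log_div (ne_of_gt (hg a)) (ne_of_gt h)
      have h3 : g a / p a - 1 = (g a - p a) / p a := by field_simp
      rw [h2, h3] at h1
      have h4 := mul_le_mul_of_nonneg_left h1 h.le
      rw [mul_div_cancel₀ _ (ne_of_gt h)] at h4
      simp only [Real.negMulLog]
      nlinarith
  have hsum2 := Finset.sum_le_sum (fun a (_ : a ∈ Finset.univ) => key a)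
  rw [Finset.sum_sub_distrib, Finset.sum_sub_distrib] at hsum2
  linarith

set_option maxHeartbeats 1000000 in
/-- 'Trees satisfy Sparse implies Thin', probability-space form. -/
theorem stmt_10 (d : ℕ) (hd : 3 ≤ d) (δ : ℝ) (hδ : δ ∈ Set.Ioc 0 ((d : ℝ) - 2)) :
    ∃ c > (0 : ℝ),
      ∀ (Ω : Type) [MeasurableSpace Ω] (μ : Measure Ω), IsProbabilityMeasure μ →
      ∀ (X₀ : Ω → Bool) (X : Fin d → Ω → Bool),
        Measurable X₀ → (∀ i, Measurable (X i)) →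
      ∀ ε ∈ Set.Ioo (0 : ℝ) 1,
        (μ (X₀ ⁻¹' {true})).toReal = ε →
        (∀ i, (μ (X i ⁻¹' {true})).toReal = ε) →
        shannonEntropy μ (fun ω => (X₀ ω, fun i => X i ω))
          ≥ ((d : ℝ) - 1) * shannonEntropy μ X₀ →
        (∫ ω, (∑ i, if X i ω = true then (1 : ℝ) else 0) *
            (if X₀ ω = true then (1 : ℝ) else 0) ∂μ) ≥ (2 + δ) * ε →
        ε ≥ c := by
  obtain ⟨hδ0, hδd⟩ := hδ
  have hd3 : (3 : ℝ) ≤ (d : ℝ) := by exact_mod_cast hd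
  refine ⟨min (1/2) (Real.exp (-(3 * (d:ℝ)) / δ)),
    lt_min (by norm_num) (Real.exp_pos _), ?_⟩
  intro Ω _ μ hμ X₀ X hX₀ hX ε hε hε₀ hεi hEnt hInt
  obtain ⟨hε0, hε1⟩ := hε
  rcases le_or_gt (1/2 : ℝ) ε with hhalf | hhalf
  · exact le_trans (min_le_left _ _) hhalf
  refine le_trans (min_le_right _ _) ?_
  set Y : Ω → Bool × (Fin d → Bool) := fun ω => (X₀ ω, fun i => X i ω) with hY
  have hYm : Measurable Y := hX₀.prodMk (measurable_pi_lambda _ hX)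
  set p : Bool × (Fin d → Bool) → ℝ := fun a => (μ (Y ⁻¹' {a})).toReal with hp
  have hpnn : ∀ a, 0 ≤ p a := fun a => ENNReal.toReal_nonneg
  have master : ∀ (q : Bool × (Fin d → Bool) → Prop) [DecidablePred q],
      (μ (Y ⁻¹' {a | q a})).toReal = ∑ a, if q a then p a else 0 := by
    intro q _
    have hset : {a | q a} = ↑(Finset.univ.filter q) := by ext a; simp
    rw [hset, ← MeasureTheory.sum_measure_preimage_singleton _
        (fun b _ => hYm (measurableSet_singleton b)),
      ENNReal.toReal_sum (fun a _ => measure_ne_top μ _), Finset.sum_filter]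
  have hsum1 : ∑ a, p a = 1 := by
    have h := master (fun _ => True)
    simp only [Set.setOf_true, Set.preimage_univ, measure_univ, ENNReal.toReal_one,
      if_true] at h
    exact h.symm
  have hA : ∑ a, (if a.1 = true then p a else 0) = ε := by
    have h := master (fun a => a.1 = true)
    have hs : Y ⁻¹' {a | a.1 = true} = X₀ ⁻¹' {true} := by ext ω; simp [hY]
    rw [hs, hε₀] at h
    exact h.symm
  have hXi : ∀ i, ∑ a, (if a.2 i = true then p a else 0) = ε := by
    intro i
    have h := master (fun a => a.2 i = true)
    have hs : Y ⁻¹' {a | a.2 i = true} = X i ⁻¹' {true} := by ext ω; simp [hY]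
    rw [hs, hεi i] at h
    exact h.symm
  set R : Fin d → ℝ := fun i => ∑ a, (if a.1 = true ∧ a.2 i = true then p a else 0) with hRdef
  set U : Fin d → ℝ := fun i => ∑ a, (if a.1 = false ∧ a.2 i = true then p a else 0) with hUdef
  set V : Fin d → ℝ := fun i => ∑ a, (if a.1 = false ∧ a.2 i = false then p a else 0) with hVdef
  have hRmeas : ∀ i, R i = (μ (X i ⁻¹' {true} ∩ X₀ ⁻¹' {true})).toReal := by
    intro i
    have h := master (fun a => a.1 = true ∧ a.2 i = true)
    have hs : Y ⁻¹' {a | a.1 = true ∧ a.2 i = true} = X i ⁻¹' {true} ∩ X₀ ⁻¹' {true} := by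
      ext ω; simp [hY, and_comm]
    rw [hs] at h
    simp only [hRdef]
    exact h.symm
  have hRU : ∀ i, R i + U i = ε := by
    intro i
    simp only [hRdef, hUdef]
    rw [← Finset.sum_add_distrib, ← hXi i]
    refine Finset.sum_congr rfl fun a _ => ?_
    rcases a with ⟨b, f⟩
    cases b <;> by_cases h : f i = true <;> simp [h]
  have hB : ∑ a, (if a.1 = false then p a else 0) = 1 - ε := by
    have h : ∑ a, (if a.1 = true then p a else 0) + ∑ a, (if a.1 = false then p a else 0)
        = ∑ a, p a := by
      rw [← Finset.sum_add_distrib]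
      refine Finset.sum_congr rfl fun a _ => ?_
      rcases a with ⟨b, f⟩; cases b <;> simp
    rw [hA, hsum1] at h; linarith
  have hUV : ∀ i, U i + V i = 1 - ε := by
    intro i
    simp only [hUdef, hVdef]
    rw [← Finset.sum_add_distrib, ← hB]
    refine Finset.sum_congr rfl fun a _ => ?_
    rcases a with ⟨b, f⟩
    cases b <;> by_cases h : f i = true <;> simp [h]
  have hUnn : ∀ i, 0 ≤ U i := by
    intro i
    simp only [hUdef]
    exact Finset.sum_nonneg fun a _ => by split; exacts [hpnn a, le_rfl]
  have hVnn : ∀ i, 0 ≤ V i := by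
    intro i
    simp only [hVdef]
    exact Finset.sum_nonneg fun a _ => by split; exacts [hpnn a, le_rfl]
  -- the integral equals ∑ i, R i
  have hIntEq : (∫ ω, (∑ i, if X i ω = true then (1 : ℝ) else 0) *
      (if X₀ ω = true then (1 : ℝ) else 0) ∂μ) = ∑ i, R i := by
    have hSm : ∀ i : Fin d, MeasurableSet (X i ⁻¹' {true} ∩ X₀ ⁻¹' {true}) :=
      fun i => ((hX i) (measurableSet_singleton true)).inter
        (hX₀ (measurableSet_singleton true))
    have hfun : ∀ ω, (∑ i, if X i ω = true then (1 : ℝ) else 0) *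
        (if X₀ ω = true then (1 : ℝ) else 0) =
        ∑ i, (X i ⁻¹' {true} ∩ X₀ ⁻¹' {true}).indicator (fun _ => (1:ℝ)) ω := by
      intro ω
      rw [Finset.sum_mul]
      refine Finset.sum_congr rfl fun i _ => ?_
      by_cases h1 : X i ω = true <;> by_cases h2 : X₀ ω = true <;>
        simp [Set.indicator_apply, Set.mem_inter_iff, h1, h2]
    rw [show (∫ ω, (∑ i, if X i ω = true then (1 : ℝ) else 0) *
        (if X₀ ω = true then (1 : ℝ) else 0) ∂μ) =
        ∫ ω, ∑ i, (X i ⁻¹' {true} ∩ X₀ ⁻¹' {true}).indicator (fun _ => (1:ℝ)) ω ∂μ from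
      integral_congr_ae (Filter.Eventually.of_forall hfun)]
    rw [integral_finset_sum _ (fun i _ => (integrable_const (1:ℝ)).indicator (hSm i))]
    refine Finset.sum_congr rfl fun i _ => ?_
    rw [integral_indicator_const (1:ℝ) (hSm i), smul_eq_mul, mul_one, measureReal_def, hRmeas i]
  have hRsum : (2 + δ) * ε ≤ ∑ i, R i := by rw [← hIntEq]; exact hInt
  -- basic log quantities
  set L : ℝ := - Real.log ε with hL
  set M : ℝ := - Real.log (1 - ε) with hM
  have hLpos : 0 < L := by
    have := Real.log_neg hε0 hε1
    simp only [hL]; linarith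
  have hMnn : 0 ≤ M := by
    have := Real.log_nonpos (show (0:ℝ) ≤ 1 - ε by linarith) (show (1:ℝ) - ε ≤ 1 by linarith)
    simp only [hM]; linarith
  have hM2 : M ≤ 2 * ε := by
    have h2 : 1 + 2*ε ≤ Real.exp (2*ε) := by
      have := Real.add_one_le_exp (2*ε); linarith
    have h4 : (Real.exp (2*ε))⁻¹ ≤ (1 + 2*ε)⁻¹ :=
      inv_anti₀ (show (0:ℝ) < 1 + 2*ε by linarith) h2
    have h5 : (1 + 2*ε)⁻¹ ≤ 1 - ε := by
      rw [← one_div, div_le_iff₀ (by linarith)]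
      nlinarith
    have h1 : Real.exp (-(2*ε)) ≤ 1 - ε := by
      rw [Real.exp_neg]; linarith
    have := (Real.le_log_iff_exp_le (by linarith : (0:ℝ) < 1 - ε)).2 h1
    simp only [hM]; linarith
  -- entropy of X₀
  have hH0 : shannonEntropy μ X₀ = ε * L + (1 - ε) * M := by
    have hfalse : X₀ ⁻¹' {false} = (X₀ ⁻¹' {true})ᶜ := by
      ext ω; simp
    have hcompl : (μ (X₀ ⁻¹' {false})).toReal = 1 - ε := by
      rw [hfalse, prob_compl_eq_one_sub (hX₀ (measurableSet_singleton true)),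
        ENNReal.toReal_sub_of_le prob_le_one ENNReal.one_ne_top, ENNReal.toReal_one, hε₀]
    rw [shannonEntropy, Fintype.sum_bool, hcompl, hε₀]
    simp only [Real.negMulLog, hL, hM]; ring
  have hJoint : shannonEntropy μ Y = ∑ a, Real.negMulLog (p a) := rfl
  -- the comparison vector g
  set g : Bool × (Fin d → Bool) → ℝ := fun a =>
    if a.1 = true then ε * (1/2)^d
    else (1 - ε) * ∏ i, (if a.2 i = true then ε else 1 - ε) with hg
  have hgpos : ∀ a, 0 < g a := by
    intro a
    simp only [hg]
    split
    · positivity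
    · refine mul_pos (by linarith) (Finset.prod_pos fun i _ => ?_)
      split <;> linarith
  have hgsum : ∑ a, g a = 1 := by
    rw [Fintype.sum_prod_type, Fintype.sum_bool]
    have htrue : ∑ f : Fin d → Bool, g (true, f) = ε := by
      simp only [hg, if_pos rfl]
      rw [Finset.sum_const]
      simp only [Finset.card_univ, Fintype.card_fun, Fintype.card_bool, Fintype.card_fin,
        nsmul_eq_mul]
      rw [show ((2^d : ℕ) : ℝ) = (2:ℝ)^d by push_cast; ring]
      rw [mul_comm ((2:ℝ)^d), mul_assoc, ← mul_pow]
      norm_num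
    have hfalse : ∑ f : Fin d → Bool, g (false, f) = 1 - ε := by
      simp only [hg, show ((false : Bool) = true) = False by simp, if_false]
      rw [← Finset.mul_sum,
        ← Fintype.prod_sum (fun (_ : Fin d) (v : Bool) => if v = true then ε else 1 - ε)]
      simp [Fintype.sum_bool]
    rw [htrue, hfalse]; ring
  -- cross entropy computation
  have hCE : ∑ a, p a * (- Real.log (g a)) =
      (L + (d:ℝ) * Real.log 2) * ε + M * (1 - ε) + ∑ i, (L * U i + M * V i) := by
    have hpt : ∀ a, p a * (- Real.log (g a)) =
        (L + (d:ℝ) * Real.log 2) * (if a.1 = true then p a else 0)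
        + M * (if a.1 = false then p a else 0)
        + ∑ i, (L * (if a.1 = false ∧ a.2 i = true then p a else 0)
          + M * (if a.1 = false ∧ a.2 i = false then p a else 0)) := by
      intro a
      rcases a with ⟨b, f⟩
      cases b
      · -- b = false
        have hprod : (0:ℝ) < ∏ i, (if f i = true then ε else 1 - ε) :=
          Finset.prod_pos fun i _ => by split <;> linarith
        have hlog : - Real.log (g (false, f)) = M + ∑ i, (if f i = true then L else M) := by
          have hgf : g (false, f) = (1 - ε) * ∏ i, (if f i = true then ε else 1 - ε) := by
            simp [hg]
          rw [hgf, Real.log_mul (by linarith) (ne_of_gt hprod),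
            Real.log_prod (fun i _ => by split <;> [linarith; linarith])]
          rw [neg_add, ← Finset.sum_neg_distrib]
          congr 1
          exact Finset.sum_congr rfl fun i _ => by
            by_cases h : f i = true <;> simp [h, hL, hM]
        rw [hlog]
        simp only [show ((false : Bool) = true) = False by simp, if_false, mul_zero,
          show ((false : Bool) = false) = True by simp, if_true, true_and, false_and,
          zero_add]
        rw [mul_add, Finset.mul_sum]
        congr 1
        · ring
        · refine Finset.sum_congr rfl fun i _ => ?_
          by_cases h : f i = true <;> simp [h] <;> ring
      · -- b = true
        have hlog : - Real.log (g (true, f)) = L + (d:ℝ) * Real.log 2 := by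
          have hgf : g (true, f) = ε * (1/2)^d := by simp [hg]
          rw [hgf, Real.log_mul (ne_of_gt hε0) (by positivity), Real.log_pow,
            one_div, Real.log_inv]
          simp only [hL]; ring
        rw [hlog]
        simp only [show ((true : Bool) = true) = True by simp, if_true,
          show ((true : Bool) = false) = False by simp, if_false, mul_zero, add_zero,
          true_and, false_and, Finset.sum_const, smul_zero, zero_add]
        ring
    calc ∑ a, p a * (- Real.log (g a))
        = ∑ a, ((L + (d:ℝ) * Real.log 2) * (if a.1 = true then p a else 0)
          + M * (if a.1 = false then p a else 0)
          + ∑ i, (L * (if a.1 = false ∧ a.2 i = true then p a else 0)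
            + M * (if a.1 = false ∧ a.2 i = false then p a else 0))) :=
          Finset.sum_congr rfl fun a _ => hpt a
      _ = (L + (d:ℝ) * Real.log 2) * (∑ a, if a.1 = true then p a else 0)
          + M * (∑ a, if a.1 = false then p a else 0)
          + ∑ a, ∑ i, (L * (if a.1 = false ∧ a.2 i = true then p a else 0)
            + M * (if a.1 = false ∧ a.2 i = false then p a else 0)) := by
          rw [Finset.sum_add_distrib, Finset.sum_add_distrib, Finset.mul_sum, Finset.mul_sum]
      _ = (L + (d:ℝ) * Real.log 2) * ε + M * (1 - ε) + ∑ i, (L * U i + M * V i) := by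
          rw [hA, hB, Finset.sum_comm]
          congr 1
          refine Finset.sum_congr rfl fun i _ => ?_
          rw [Finset.sum_add_distrib, ← Finset.mul_sum, ← Finset.mul_sum]
  -- combine everything
  have hGibbs := gibbs_cross_entropy p g hpnn hgpos (by rw [hgsum, hsum1])
  have hmain : ((d:ℝ) - 1) * (ε * L + (1 - ε) * M) ≤
      (L + (d:ℝ) * Real.log 2) * ε + M * (1 - ε) + ∑ i, (L * U i + M * V i) := by
    calc ((d:ℝ) - 1) * (ε * L + (1 - ε) * M) = ((d:ℝ) - 1) * shannonEntropy μ X₀ := by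
          rw [hH0]
      _ ≤ shannonEntropy μ Y := hEnt
      _ = ∑ a, Real.negMulLog (p a) := hJoint
      _ ≤ ∑ a, p a * (- Real.log (g a)) := hGibbs
      _ = _ := hCE
  have hsplit : ∑ i, (L * U i + M * V i) = L * (∑ i, U i) + ∑ i, M * V i := by
    rw [Finset.sum_add_distrib, Finset.mul_sum]
  rw [hsplit] at hmain
  have hSU : ∑ i, U i ≤ ((d:ℝ) - 2 - δ) * ε := by
    have h1 : ∑ i, (R i + U i) = (d:ℝ) * ε := by
      rw [Finset.sum_congr rfl (fun i _ => hRU i), Finset.sum_const]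
      simp [nsmul_eq_mul]
    rw [Finset.sum_add_distrib] at h1
    nlinarith [hRsum]
  have hSUL : L * (∑ i, U i) ≤ L * (((d:ℝ) - 2 - δ) * ε) :=
    mul_le_mul_of_nonneg_left hSU hLpos.le
  have hSVM : ∑ i, M * V i ≤ (d:ℝ) * (2 * ε) := by
    calc ∑ i, M * V i ≤ ∑ _i : Fin d, 2 * ε := by
          refine Finset.sum_le_sum fun i _ => ?_
          have hV1 : V i ≤ 1 := by have := hUV i; have := hUnn i; linarith
          calc M * V i ≤ (2 * ε) * 1 := mul_le_mul hM2 hV1 (hVnn i) (by linarith)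
            _ = 2 * ε := mul_one _
      _ = (d:ℝ) * (2 * ε) := by rw [Finset.sum_const]; simp [nsmul_eq_mul]
  have hlog2 : Real.log 2 ≤ 1 := by
    have := Real.log_le_sub_one_of_pos (by norm_num : (0:ℝ) < 2); linarith
  have hdlog : (d:ℝ) * Real.log 2 * ε ≤ (d:ℝ) * ε := by
    have h0 : (0:ℝ) ≤ (d:ℝ) * ε := by positivity
    nlinarith
  have hM0 : 0 ≤ ((d:ℝ) - 2) * ((1 - ε) * M) :=
    mul_nonneg (by linarith) (mul_nonneg (by linarith) hMnn)
  have hkey : δ * (L * ε) ≤ 3 * ((d:ℝ) * ε) := by linarith [hmain, hSUL, hSVM, hdlog, hM0]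
  have hkey2 : (δ * L) * ε ≤ (3 * (d:ℝ)) * ε := by linarith [hkey]
  have hδL : δ * L ≤ 3 * (d:ℝ) := le_of_mul_le_mul_right hkey2 hε0
  have hlogε : -(3 * (d:ℝ)) / δ ≤ Real.log ε := by
    have hLle : L ≤ 3 * (d:ℝ) / δ := (le_div_iff₀ hδ0).2 (by nlinarith)
    have : Real.log ε = -L := by simp [hL]
    rw [this, neg_div]
    linarith
  calc Real.exp (-(3 * (d:ℝ)) / δ) ≤ Real.exp (Real.log ε) := Real.exp_le_exp.mpr hlogε
    _ = ε := Real.exp_log hε0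
end

section
/- For every integer d ≥ 3, every γ > 0, and every ε₀ ∈ (0,1), there exists δ₀ > 0 with the following property. Suppose δ ∈ (0, δ₀) and X₀, X₁, …, X_d are Boolean-valued random variables on a probability space and ε ∈ (0,1) is such that: (i) P(Xᵢ = true) = 1−ε for every i = 0, 1, …, d; (ii) H[(X₀, X₁, …, X_d)] ≥ (1+γ)·H[X₀]; and (iii) E[ (Σᵢ₌₁^d 1{Xᵢ = false}) · 1{X₀ = true} ] ≤ d·δ·(1−ε). Then ε < ε₀. (This is the paper's theorem 'Large degree implies high density', reduced to the probability-space setting: hypothesis (ii) is the star–vertex entropy inequality H(X_S) ≥ (1+γ)·H(X_o) valid for (weak) factor-of-IID processes on a Cayley graph with external vertex Cheeger constant γ, and hypothesis (iii) says that conditionally on the root being open its expected number of closed neighbours is at most dδ; the conclusion is that the density 1−ε is at least 1−ε₀.) -/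
open MeasureTheory

lemma gibbs' {S : Type*} [Fintype S] (p q : S → ℝ) (hp : ∀ a, 0 ≤ p a)
    (hq : ∀ a, 0 ≤ q a) (h0 : ∀ a, q a = 0 → p a = 0)
    (hsum : ∑ a, q a ≤ ∑ a, p a) :
    ∑ a, Real.negMulLog (p a) ≤ -∑ a, p a * Real.log (q a) := by
  have key : ∀ a, p a * Real.log (q a) - p a * Real.log (p a) ≤ q a - p a := by
    intro a
    rcases (hp a).eq_or_lt with h | h
    · simpa [← h] using hq a
    · have hqa : 0 < q a := lt_of_le_of_ne (hq a) (fun hz => h.ne' (h0 a hz.symm))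
      have hlog : Real.log (q a / p a) ≤ q a / p a - 1 :=
        Real.log_le_sub_one_of_pos (div_pos hqa h)
      have h2 : Real.log (q a / p a) = Real.log (q a) - Real.log (p a) :=
        Real.log_div hqa.ne' h.ne'
      have h3 := mul_le_mul_of_nonneg_left hlog h.le
      rw [h2] at h3
      have h4 : p a * (q a / p a - 1) = q a - p a := by field_simp
      linarith [h3, h4.le]
  have hsum2 : ∑ a, (p a * Real.log (q a) - p a * Real.log (p a)) ≤ ∑ a, (q a - p a) :=
    Finset.sum_le_sum fun a _ => key a
  rw [Finset.sum_sub_distrib, Finset.sum_sub_distrib] at hsum2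
  have hneg : ∑ a, Real.negMulLog (p a) = -∑ a, p a * Real.log (p a) := by
    simp [Real.negMulLog, Finset.sum_neg_distrib]
  linarith

lemma negMulLog_sub_le' {x p : ℝ} (hp : 0 ≤ p) (hpx : p ≤ x) (hx : x ≤ 1) :
    Real.negMulLog (x - p) ≤ Real.negMulLog x + p := by
  rcases hpx.eq_or_lt with h | h
  · rw [h]
    simp only [sub_self, Real.negMulLog_zero]
    have h1 := Real.negMulLog_nonneg (le_trans hp hpx) hx
    have h2 : (0:ℝ) ≤ x := le_trans hp hpx
    linarith
  · have hxp : 0 < x - p := sub_pos.2 h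
    have hx0 : 0 < x := lt_of_le_of_lt hp h
    have hlog : Real.log (x / (x - p)) ≤ x / (x - p) - 1 :=
      Real.log_le_sub_one_of_pos (div_pos hx0 hxp)
    have h1 : (x - p) * Real.log (x / (x - p)) ≤ p := by
      have h3 := mul_le_mul_of_nonneg_left hlog hxp.le
      have h4 : (x - p) * (x / (x - p) - 1) = p := by field_simp; ring
      linarith
    have h2 : Real.log (x / (x - p)) = Real.log x - Real.log (x - p) :=
      Real.log_div hx0.ne' hxp.ne'
    have h3 : 0 ≤ -Real.log x := neg_nonneg.2 (Real.log_nonpos hx0.le hx)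
    have h4 : (x - p) * (-Real.log x) ≤ x * (-Real.log x) :=
      mul_le_mul_of_nonneg_right (by linarith) h3
    have key : Real.negMulLog (x - p)
        = (x - p) * Real.log (x / (x - p)) + (x - p) * (-Real.log x) := by
      rw [h2]; simp only [Real.negMulLog]; ring
    have key2 : Real.negMulLog x = x * (-Real.log x) := by
      simp only [Real.negMulLog]; ring
    linarith

lemma negMulLog_le_two_sqrt' {x : ℝ} (hx : 0 ≤ x) : Real.negMulLog x ≤ 2 * Real.sqrt x := by
  rcases hx.eq_or_lt with h | h
  · simp [← h]
  · have hs : 0 < Real.sqrt x := Real.sqrt_pos.2 h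
    have hlog1 : Real.log (1 / Real.sqrt x) ≤ 1 / Real.sqrt x - 1 :=
      Real.log_le_sub_one_of_pos (by positivity)
    have hlog : -Real.log (Real.sqrt x) ≤ 1 / Real.sqrt x := by
      rw [Real.log_div one_ne_zero hs.ne', Real.log_one] at hlog1; linarith
    have h2 : Real.log x = 2 * Real.log (Real.sqrt x) := by
      rw [Real.log_sqrt hx]; ring
    have key : Real.negMulLog x = x * (2 * (-Real.log (Real.sqrt x))) := by
      simp only [Real.negMulLog, h2]; ring
    rw [key]
    have step : x * (2 * (-Real.log (Real.sqrt x))) ≤ x * (2 * (1 / Real.sqrt x)) := by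
      apply mul_le_mul_of_nonneg_left (by linarith) hx
    refine step.trans ?_
    have heq : x * (2 * (1 / Real.sqrt x)) = 2 * (x / Real.sqrt x) := by ring
    rw [heq, Real.div_sqrt]

lemma sum_sqrt_le' {d : ℕ} (u : Fin d → ℝ) (hu : ∀ i, 0 ≤ u i) :
    ∑ i, Real.sqrt (u i) ≤ Real.sqrt (d * ∑ i, u i) := by
  have h1 : (∑ i, Real.sqrt (u i)) ^ 2 ≤ (d : ℝ) * ∑ i, u i := by
    have h := sq_sum_le_card_mul_sum_sq (s := (Finset.univ : Finset (Fin d)))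
      (f := fun i => Real.sqrt (u i))
    simpa [Real.sq_sqrt (hu _)] using h
  exact Real.le_sqrt_of_sq_le h1

/-- 'Large degree implies high density', probability-space form: for every
integer `d ≥ 3`, `γ > 0` and `ε₀ ∈ (0,1)` there is `δ₀ > 0` such that whenever
`δ ∈ (0, δ₀)` and Boolean random variables `X₀, X₁, …, X_d` satisfy
(i) `P(Xᵢ = true) = 1−ε` for all `i`, (ii) the star–vertex entropy inequality
`H[(X₀,…,X_d)] ≥ (1+γ)·H[X₀]`, and
(iii) `E[(Σᵢ 1{Xᵢ = false})·1{X₀ = true}] ≤ d·δ·(1−ε)`, then `ε < ε₀`. -/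
theorem stmt_11 (d : ℕ) (hd : 3 ≤ d) (γ : ℝ) (hγ : 0 < γ)
    (ε₀ : ℝ) (hε₀ : ε₀ ∈ Set.Ioo (0 : ℝ) 1) :
    ∃ δ₀ > (0 : ℝ),
      ∀ δ ∈ Set.Ioo (0 : ℝ) δ₀,
      ∀ (Ω : Type) [MeasurableSpace Ω] (μ : Measure Ω), IsProbabilityMeasure μ →
      ∀ (X₀ : Ω → Bool) (X : Fin d → Ω → Bool),
        Measurable X₀ → (∀ i, Measurable (X i)) →
      ∀ ε ∈ Set.Ioo (0 : ℝ) 1,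
        (μ (X₀ ⁻¹' {true})).toReal = 1 - ε →
        (∀ i, (μ (X i ⁻¹' {true})).toReal = 1 - ε) →
        shannonEntropy μ (fun ω => (X₀ ω, fun i => X i ω))
          ≥ (1 + γ) * shannonEntropy μ X₀ →
        (∫ ω, (∑ i, if X i ω = false then (1 : ℝ) else 0) *
            (if X₀ ω = true then (1 : ℝ) else 0) ∂μ) ≤ d * δ * (1 - ε) →
        ε < ε₀ := by
  classical
  obtain ⟨hε₀0, hε₀1⟩ := hε₀
  set L₀ : ℝ := -Real.log (1 - ε₀) with hL₀
  have hL₀pos : 0 < L₀ := by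
    have : Real.log (1 - ε₀) < 0 := Real.log_neg (by linarith) (by linarith)
    simp only [hL₀]; linarith
  have hdpos : (0:ℝ) < d := by positivity
  have hd3 : (3:ℝ) ≤ d := by exact_mod_cast hd
  refine ⟨min (γ / (8 * d)) (min ((γ * L₀ / (16 * d))^2) (γ * L₀ / (8 * d))), ?_, ?_⟩
  · have h1 : 0 < γ / (8 * d) := by positivity
    have h2 : 0 < (γ * L₀ / (16 * d))^2 := by positivity
    have h3 : 0 < γ * L₀ / (8 * d) := by positivity
    exact lt_min h1 (lt_min h2 h3)
  intro δ hδ Ω _ μ hμ X₀ X hX₀ hX ε hε hX0ε hXiε hEnt hInt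
  obtain ⟨hδpos, hδlt⟩ := hδ
  obtain ⟨hεpos, hεlt⟩ := hε
  by_contra hcon
  push_neg at hcon
  -- δ bounds
  have hδ1 : δ < γ / (8 * d) := lt_of_lt_of_le hδlt (min_le_left _ _)
  have hδ2 : δ < (γ * L₀ / (16 * d))^2 :=
    lt_of_lt_of_le hδlt ((min_le_right _ _).trans (min_le_left _ _))
  have hδ3 : δ < γ * L₀ / (8 * d) :=
    lt_of_lt_of_le hδlt ((min_le_right _ _).trans (min_le_right _ _))
  -- definitions
  set J : Ω → Bool × (Fin d → Bool) := fun ω => (X₀ ω, fun i => X i ω) with hJdef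
  have hJ : Measurable J := hX₀.prodMk (measurable_pi_lambda _ fun i => hX i)
  set p : Bool × (Fin d → Bool) → ℝ := fun a => (μ (J ⁻¹' {a})).toReal with hpdef
  set r : Bool → ℝ := fun b => (μ (X₀ ⁻¹' {b})).toReal with hrdef
  set m : Bool → Fin d → Bool → ℝ :=
    fun b i c => (μ (X₀ ⁻¹' {b} ∩ X i ⁻¹' {c})).toReal with hmdef
  have fiber : ∀ t : Finset (Bool × (Fin d → Bool)),
      ∑ a ∈ t, p a = (μ (J ⁻¹' ↑t)).toReal := by
    intro t
    rw [← MeasureTheory.sum_measure_preimage_singleton t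
      (fun y _ => hJ (measurableSet_singleton y)),
      ENNReal.toReal_sum (fun a _ => measure_ne_top μ _)]
  have hp_nonneg : ∀ a, 0 ≤ p a := fun a => ENNReal.toReal_nonneg
  have hm_nonneg : ∀ b i c, 0 ≤ m b i c := fun b i c => ENNReal.toReal_nonneg
  have hp1 : ∑ a : Bool × (Fin d → Bool), p a = 1 := by
    rw [fiber Finset.univ]
    simp
  have hrsum : ∀ b : Bool,
      r b = ∑ a ∈ Finset.univ.filter (fun a : Bool × (Fin d → Bool) => a.1 = b), p a := by
    intro b
    rw [fiber]
    have hset : J ⁻¹' ↑(Finset.univ.filter (fun a : Bool × (Fin d → Bool) => a.1 = b))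
        = X₀ ⁻¹' {b} := by
      ext ω; simp [hJdef]
    rw [hset]
  have hmsum : ∀ (bc : Bool × Bool) (i : Fin d),
      m bc.1 i bc.2 = ∑ a ∈ Finset.univ.filter
        (fun a : Bool × (Fin d → Bool) => (a.1, a.2 i) = bc), p a := by
    intro bc i
    rw [fiber]
    have hset : J ⁻¹' ↑(Finset.univ.filter
        (fun a : Bool × (Fin d → Bool) => (a.1, a.2 i) = bc))
        = X₀ ⁻¹' {bc.1} ∩ X i ⁻¹' {bc.2} := by
      ext ω; simp [hJdef, Prod.ext_iff]
    rw [hset]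
  have hmr : ∀ (b : Bool) (i : Fin d), m b i true + m b i false = r b := by
    intro b i
    simp only [hmdef, hrdef]
    rw [← ENNReal.toReal_add (measure_ne_top μ _) (measure_ne_top μ _)]
    congr 1
    have hU : (X₀ ⁻¹' {b} ∩ X i ⁻¹' {true}) ∪ (X₀ ⁻¹' {b} ∩ X i ⁻¹' {false})
        = X₀ ⁻¹' {b} := by
      ext ω; cases hxi : X i ω <;> simp [hxi]
    have hdisj : Disjoint (X₀ ⁻¹' {b} ∩ X i ⁻¹' {true}) (X₀ ⁻¹' {b} ∩ X i ⁻¹' {false}) := by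
      apply Set.disjoint_left.mpr
      rintro ω ⟨-, h1⟩ ⟨-, h2⟩
      simp only [Set.mem_preimage, Set.mem_singleton_iff] at h1 h2
      rw [h1] at h2; exact Bool.noConfusion h2
    rw [← measure_union hdisj
      ((hX₀ (measurableSet_singleton b)).inter (hX i (measurableSet_singleton false))), hU]
  have hmc : ∀ (i : Fin d) (c : Bool),
      m true i c + m false i c = (μ (X i ⁻¹' {c})).toReal := by
    intro i c
    simp only [hmdef]
    rw [← ENNReal.toReal_add (measure_ne_top μ _) (measure_ne_top μ _)]
    congr 1
    have hU : (X₀ ⁻¹' {true} ∩ X i ⁻¹' {c}) ∪ (X₀ ⁻¹' {false} ∩ X i ⁻¹' {c})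
        = X i ⁻¹' {c} := by
      ext ω; cases hx0 : X₀ ω <;> simp [hx0]
    have hdisj : Disjoint (X₀ ⁻¹' {true} ∩ X i ⁻¹' {c}) (X₀ ⁻¹' {false} ∩ X i ⁻¹' {c}) := by
      apply Set.disjoint_left.mpr
      rintro ω ⟨h1, -⟩ ⟨h2, -⟩
      simp only [Set.mem_preimage, Set.mem_singleton_iff] at h1 h2
      rw [h1] at h2; exact Bool.noConfusion h2
    rw [← measure_union hdisj
      ((hX₀ (measurableSet_singleton false)).inter (hX i (measurableSet_singleton c))), hU]
  have hr_true : r true = 1 - ε := by simp only [hrdef]; exact hX0ε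
  have hr1 : r true + r false = 1 := by
    simp only [hrdef]
    rw [← ENNReal.toReal_add (measure_ne_top μ _) (measure_ne_top μ _)]
    have hU : (X₀ ⁻¹' {true}) ∪ (X₀ ⁻¹' {false}) = Set.univ := by
      ext ω; cases hx0 : X₀ ω <;> simp [hx0]
    have hdisj : Disjoint (X₀ ⁻¹' ({true} : Set Bool)) (X₀ ⁻¹' {false}) := by
      apply Set.disjoint_left.mpr
      rintro ω h1 h2
      simp only [Set.mem_preimage, Set.mem_singleton_iff] at h1 h2
      rw [h1] at h2; exact Bool.noConfusion h2
    rw [← measure_union hdisj (hX₀ (measurableSet_singleton false)), hU]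
    simp
  have hr_false : r false = ε := by linarith
  have hrpos : ∀ b, 0 < r b := by
    intro b; cases b
    · rw [hr_false]; exact hεpos
    · rw [hr_true]; linarith
  have hpm : ∀ (a : Bool × (Fin d → Bool)) (i : Fin d), p a ≤ m a.1 i (a.2 i) := by
    intro a i
    simp only [hpdef, hmdef]
    apply ENNReal.toReal_mono (measure_ne_top μ _)
    apply measure_mono
    intro ω hω
    simp only [Set.mem_preimage, Set.mem_singleton_iff, hJdef] at hω
    refine ⟨?_, ?_⟩
    · have := congrArg Prod.fst hω; simpa using this
    · have := congrArg (fun z : Bool × (Fin d → Bool) => z.2 i) hω; simpa using this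
  -- atom values
  have h_tt : ∀ i : Fin d, m true i true = (1 - ε) - m true i false := by
    intro i; have := hmr true i; rw [hr_true] at this; linarith
  have h_ft : ∀ i : Fin d, m false i true = m true i false := by
    intro i
    have h1 := hmc i true
    rw [hXiε i] at h1
    have h2 := h_tt i
    linarith
  have h_ff : ∀ i : Fin d, m false i false = ε - m true i false := by
    intro i
    have h1 := hmr false i
    rw [hr_false] at h1
    have h2 := h_ft i
    linarith
  have hPle_s : ∀ i : Fin d, m true i false ≤ 1 - ε := by
    intro i; have := hm_nonneg true i true; rw [h_tt i] at this; linarith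
  have hPle_ε : ∀ i : Fin d, m true i false ≤ ε := by
    intro i; have := hm_nonneg false i false; rw [h_ff i] at this; linarith
  -- the integral condition
  have hmeasI : ∀ i : Fin d, MeasurableSet (X₀ ⁻¹' {true} ∩ X i ⁻¹' {false}) :=
    fun i => (hX₀ (measurableSet_singleton true)).inter (hX i (measurableSet_singleton false))
  have heqI : ∀ i : Fin d, (fun ω => (if X i ω = false then (1:ℝ) else 0) *
      (if X₀ ω = true then (1:ℝ) else 0))
      = (X₀ ⁻¹' {true} ∩ X i ⁻¹' {false}).indicator (fun _ => (1:ℝ)) := by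
    intro i; funext ω
    by_cases h1 : X i ω = false <;> by_cases h2 : X₀ ω = true <;>
      simp [Set.indicator_apply, h1, h2]
  have hint2 : ∑ i, m true i false ≤ d * δ * (1 - ε) := by
    have hrw : (∫ ω, (∑ i, if X i ω = false then (1:ℝ) else 0) *
        (if X₀ ω = true then (1:ℝ) else 0) ∂μ) = ∑ i, m true i false := by
      have hfe : (fun ω => (∑ i, if X i ω = false then (1:ℝ) else 0) *
          (if X₀ ω = true then (1:ℝ) else 0))
          = fun ω => ∑ i, ((X₀ ⁻¹' {true} ∩ X i ⁻¹' {false}).indicator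
              (fun _ => (1:ℝ)) ω) := by
        funext ω
        rw [Finset.sum_mul]
        exact Finset.sum_congr rfl fun i _ => congrFun (heqI i) ω
      rw [hfe, integral_finset_sum _
        (fun i _ => (integrable_const (1:ℝ)).indicator (hmeasI i))]
      simp only [hmdef]
      refine Finset.sum_congr rfl fun i _ => ?_
      rw [integral_indicator_const (1:ℝ) (hmeasI i)]
      simp; rfl
    rw [hrw] at hInt
    exact hInt
  -- the auxiliary product distribution
  set q : Bool × (Fin d → Bool) → ℝ :=
    fun a => (∏ i, m a.1 i (a.2 i)) / r a.1 ^ (d - 1) with hqdef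
  have hq_nonneg : ∀ a, 0 ≤ q a := by
    intro a
    simp only [hqdef]
    exact div_nonneg (Finset.prod_nonneg fun i _ => hm_nonneg _ i _)
      (pow_nonneg (hrpos a.1).le _)
  have hq0 : ∀ a, q a = 0 → p a = 0 := by
    intro a ha
    simp only [hqdef] at ha
    rw [div_eq_zero_iff] at ha
    rcases ha with ha | ha
    · obtain ⟨i, -, hi⟩ := Finset.prod_eq_zero_iff.mp ha
      have h1 := hpm a i
      have h2 := hp_nonneg a
      rw [hi] at h1
      linarith
    · exact absurd ha (pow_ne_zero _ (hrpos a.1).ne')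
  have hpowdiv : ∀ b : Bool, r b ^ d / r b ^ (d - 1) = r b := by
    intro b
    have h1 : r b ^ d = r b ^ (d - 1) * r b := by
      rw [← pow_succ]; congr 1; omega
    rw [h1]
    exact mul_div_cancel_left₀ _ (pow_ne_zero _ (hrpos b).ne')
  have hqsum : ∑ a, q a = 1 := by
    rw [Fintype.sum_prod_type]
    have hrow : ∀ b : Bool, ∑ f : Fin d → Bool, q (b, f) = r b := by
      intro b
      have h1 : ∑ f : Fin d → Bool, ∏ i, m b i (f i) = ∏ i, ∑ c : Bool, m b i c := by
        rw [Finset.prod_univ_sum, Fintype.piFinset_univ]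
      have h2 : ∀ i : Fin d, ∑ c : Bool, m b i c = r b := by
        intro i; rw [Fintype.sum_bool]; exact hmr b i
      simp only [hqdef]
      rw [← Finset.sum_div, h1]
      rw [Finset.prod_congr rfl (fun i _ => h2 i), Finset.prod_const,
        Finset.card_univ, Fintype.card_fin]
      exact hpowdiv b
    rw [Fintype.sum_bool, hrow, hrow]
    exact hr1
  -- pointwise log expansion
  have hd1R : ((d - 1 : ℕ) : ℝ) = (d : ℝ) - 1 := by
    have h1 : (1:ℕ) ≤ d := by omega
    rw [Nat.cast_sub h1, Nat.cast_one]
  have hpoint : ∀ a, p a * Real.log (q a)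
      = (∑ i, p a * Real.log (m a.1 i (a.2 i))) - ((d:ℝ) - 1) * (p a * Real.log (r a.1)) := by
    intro a
    rcases (hp_nonneg a).eq_or_lt with h | h
    · rw [← h]; simp
    · have hmpos : ∀ i : Fin d, 0 < m a.1 i (a.2 i) := fun i => lt_of_lt_of_le h (hpm a i)
      have hprodpos : 0 < ∏ i, m a.1 i (a.2 i) := Finset.prod_pos fun i _ => hmpos i
      simp only [hqdef]
      rw [Real.log_div hprodpos.ne' (pow_ne_zero _ (hrpos a.1).ne'),
        Real.log_prod (fun i _ => (hmpos i).ne'), Real.log_pow, hd1R,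
        mul_sub, Finset.mul_sum]
      ring
  have hgroup1 : ∀ i : Fin d, ∑ a, p a * Real.log (m a.1 i (a.2 i))
      = ∑ bc : Bool × Bool, m bc.1 i bc.2 * Real.log (m bc.1 i bc.2) := by
    intro i
    rw [← Finset.sum_fiberwise Finset.univ (fun a : Bool × (Fin d → Bool) => (a.1, a.2 i))
      (fun a => p a * Real.log (m a.1 i (a.2 i)))]
    refine Finset.sum_congr rfl fun bc _ => ?_
    have hcongr : ∀ a ∈ Finset.univ.filter
        (fun a : Bool × (Fin d → Bool) => (a.1, a.2 i) = bc),
        p a * Real.log (m a.1 i (a.2 i)) = p a * Real.log (m bc.1 i bc.2) := by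
      intro a ha
      rw [Finset.mem_filter] at ha
      rw [← ha.2]
    rw [Finset.sum_congr rfl hcongr, ← Finset.sum_mul, ← hmsum bc i]
  have hgroup2 : ∑ a, p a * Real.log (r a.1) = ∑ b : Bool, r b * Real.log (r b) := by
    rw [← Finset.sum_fiberwise Finset.univ (fun a : Bool × (Fin d → Bool) => a.1)
      (fun a => p a * Real.log (r a.1))]
    refine Finset.sum_congr rfl fun b _ => ?_
    have hcongr : ∀ a ∈ Finset.univ.filter
        (fun a : Bool × (Fin d → Bool) => a.1 = b),
        p a * Real.log (r a.1) = p a * Real.log (r b) := by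
      intro a ha
      rw [Finset.mem_filter] at ha
      rw [ha.2]
    rw [Finset.sum_congr rfl hcongr, ← Finset.sum_mul, ← hrsum b]
  have hcross : ∑ a, p a * Real.log (q a)
      = (∑ i, ∑ bc : Bool × Bool, m bc.1 i bc.2 * Real.log (m bc.1 i bc.2))
        - ((d:ℝ) - 1) * ∑ b : Bool, r b * Real.log (r b) := by
    rw [Finset.sum_congr rfl (fun a _ => hpoint a), Finset.sum_sub_distrib,
      Finset.sum_comm, ← Finset.mul_sum, hgroup2]
    exact congrArg₂ _ (Finset.sum_congr rfl fun i _ => hgroup1 i) rfl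
  have hgibbs := gibbs' p q hp_nonneg hq_nonneg hq0 (by rw [hqsum, hp1])
  -- entropy identities
  have hHJ : shannonEntropy μ J = ∑ a, Real.negMulLog (p a) := by
    simp only [shannonEntropy, hpdef]
  have hH0 : shannonEntropy μ X₀ = ∑ b : Bool, Real.negMulLog (r b) := by
    simp only [shannonEntropy, hrdef]
  have hH0val : shannonEntropy μ X₀ = Real.negMulLog (1 - ε) + Real.negMulLog ε := by
    rw [hH0, Fintype.sum_bool, hr_true, hr_false]
  have hconv1 : ∀ i : Fin d, ∑ bc : Bool × Bool, m bc.1 i bc.2 * Real.log (m bc.1 i bc.2)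
      = -∑ bc : Bool × Bool, Real.negMulLog (m bc.1 i bc.2) := by
    intro i; simp [Real.negMulLog, Finset.sum_neg_distrib]
  have hconv2 : ∑ b : Bool, r b * Real.log (r b) = -∑ b : Bool, Real.negMulLog (r b) := by
    simp [Real.negMulLog, Finset.sum_neg_distrib]
  have hkey : shannonEntropy μ J
      ≤ (∑ i, ∑ bc : Bool × Bool, Real.negMulLog (m bc.1 i bc.2))
        - ((d:ℝ) - 1) * shannonEntropy μ X₀ := by
    rw [hHJ, hH0]
    calc ∑ a, Real.negMulLog (p a) ≤ -∑ a, p a * Real.log (q a) := hgibbs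
      _ = _ := by
        rw [hcross, hconv2,
          Finset.sum_congr rfl (fun i (_ : i ∈ Finset.univ) => hconv1 i),
          Finset.sum_neg_distrib]
        ring
  have hH2 : ∀ i : Fin d, ∑ bc : Bool × Bool, Real.negMulLog (m bc.1 i bc.2)
      = Real.negMulLog ((1 - ε) - m true i false) + Real.negMulLog (m true i false)
        + Real.negMulLog (m true i false) + Real.negMulLog (ε - m true i false) := by
    intro i
    rw [Fintype.sum_prod_type, Fintype.sum_bool, Fintype.sum_bool, Fintype.sum_bool,
      h_tt i, h_ft i, h_ff i]
    ring
  have hperI : ∀ i : Fin d, ∑ bc : Bool × Bool, Real.negMulLog (m bc.1 i bc.2)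
      ≤ shannonEntropy μ X₀ + 2 * Real.negMulLog (m true i false) + 2 * m true i false := by
    intro i
    have h1 := negMulLog_sub_le' (hm_nonneg true i false) (hPle_s i)
      (by linarith : (1:ℝ) - ε ≤ 1)
    have h2 := negMulLog_sub_le' (hm_nonneg true i false) (hPle_ε i) hεlt.le
    rw [hH2 i, hH0val]
    linarith
  have hγH : γ * shannonEntropy μ X₀
      ≤ ∑ i, (2 * Real.negMulLog (m true i false) + 2 * m true i false) := by
    have hsumle : ∑ i, ∑ bc : Bool × Bool, Real.negMulLog (m bc.1 i bc.2)
        ≤ ∑ i : Fin d, (shannonEntropy μ X₀ + 2 * Real.negMulLog (m true i false)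
            + 2 * m true i false) :=
      Finset.sum_le_sum fun i _ => hperI i
    have hsplit : ∑ i : Fin d, (shannonEntropy μ X₀ + 2 * Real.negMulLog (m true i false)
          + 2 * m true i false)
        = (d:ℝ) * shannonEntropy μ X₀
          + ∑ i, (2 * Real.negMulLog (m true i false) + 2 * m true i false) := by
      rw [Finset.sum_add_distrib, Finset.sum_add_distrib, Finset.sum_add_distrib,
        Finset.sum_const, Finset.card_univ, Fintype.card_fin, nsmul_eq_mul]
      ring
    rw [hsplit] at hsumle
    have := le_trans hEnt hkey
    linarith
  -- final arithmetic
  set s : ℝ := 1 - ε with hsdef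
  have hspos : 0 < s := by simp only [hsdef]; linarith
  set L : ℝ := -Real.log s with hLdef
  have hLge : L₀ ≤ L := by
    simp only [hLdef, hL₀]
    have := Real.log_le_log hspos (by simp only [hsdef]; linarith : s ≤ 1 - ε₀)
    linarith
  have hLpos : 0 < L := lt_of_lt_of_le hL₀pos hLge
  set D : ℝ := ∑ i, m true i false with hDdef
  have hDnn : 0 ≤ D := Finset.sum_nonneg fun i _ => hm_nonneg true i false
  have hDle : D ≤ (d:ℝ) * δ * s := hint2
  have hnml_s : Real.negMulLog s = s * L := by
    simp only [Real.negMulLog, hLdef]; ring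
  clear_value s L D L₀
  have hsplit_i : ∀ i : Fin d, Real.negMulLog (m true i false)
      = (m true i false / s) * Real.negMulLog s
        + s * Real.negMulLog (m true i false / s) := by
    intro i
    have h1 : m true i false = s * (m true i false / s) := by field_simp
    conv_lhs => rw [h1]
    rw [Real.negMulLog_mul]
  have hsum_nml : ∑ i, Real.negMulLog (m true i false)
      ≤ (D / s) * Real.negMulLog s + s * ∑ i, 2 * Real.sqrt (m true i false / s) := by
    calc ∑ i, Real.negMulLog (m true i false)
        = ∑ i, ((m true i false / s) * Real.negMulLog s
            + s * Real.negMulLog (m true i false / s)) :=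
          Finset.sum_congr rfl fun i _ => hsplit_i i
      _ = (D / s) * Real.negMulLog s + s * ∑ i, Real.negMulLog (m true i false / s) := by
          rw [Finset.sum_add_distrib, ← Finset.sum_mul, ← Finset.mul_sum,
            ← Finset.sum_div, hDdef]
      _ ≤ _ := by
          refine add_le_add (le_refl _) (mul_le_mul_of_nonneg_left ?_ hspos.le)
          exact Finset.sum_le_sum fun i _ =>
            negMulLog_le_two_sqrt' (div_nonneg (hm_nonneg true i false) hspos.le)
  have hsqrt : ∑ i, 2 * Real.sqrt (m true i false / s) ≤ 2 * ((d:ℝ) * Real.sqrt δ) := by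
    rw [← Finset.mul_sum]
    have h1 := sum_sqrt_le' (fun i => m true i false / s)
      (fun i => div_nonneg (hm_nonneg true i false) hspos.le)
    have h2 : ∑ i, m true i false / s = D / s := by
      rw [← Finset.sum_div, hDdef]
    rw [h2] at h1
    have h3 : D / s ≤ (d:ℝ) * δ := by
      rw [div_le_iff₀ hspos]
      calc D ≤ (d:ℝ) * δ * s := hDle
        _ = (d:ℝ) * δ * s := by ring
    have h4 : Real.sqrt ((d:ℝ) * (D / s)) ≤ Real.sqrt ((d:ℝ) * ((d:ℝ) * δ)) :=
      Real.sqrt_le_sqrt (mul_le_mul_of_nonneg_left h3 hdpos.le)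
    have h5 : Real.sqrt ((d:ℝ) * ((d:ℝ) * δ)) = (d:ℝ) * Real.sqrt δ := by
      rw [← mul_assoc, show (d:ℝ) * (d:ℝ) = ((d:ℝ))^2 by ring,
        Real.sqrt_mul (by positivity) δ, Real.sqrt_sq hdpos.le]
    have h6 := h1.trans (h4.trans h5.le)
    linarith
  have e1 : (D / s) * Real.negMulLog s = D * L := by
    rw [hnml_s]; field_simp
  have h_a : ∑ i, Real.negMulLog (m true i false) ≤ D * L + 2 * (d:ℝ) * s * Real.sqrt δ := by
    have h := mul_le_mul_of_nonneg_left hsqrt hspos.le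
    have e2 : s * (2 * ((d:ℝ) * Real.sqrt δ)) = 2 * (d:ℝ) * s * Real.sqrt δ := by ring
    linarith [hsum_nml]
  have h_b : D * L ≤ (d:ℝ) * δ * s * L := by
    have := mul_le_mul_of_nonneg_right hDle hLpos.le
    linarith
  have h_c : γ * (s * L) ≤ γ * shannonEntropy μ X₀ := by
    apply mul_le_mul_of_nonneg_left _ hγ.le
    have hnn := Real.negMulLog_nonneg hεpos.le hεlt.le
    rw [hH0val]
    linarith [hnml_s]
  have hsum2A : ∑ i, (2 * Real.negMulLog (m true i false) + 2 * m true i false)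
      = 2 * (∑ i, Real.negMulLog (m true i false)) + 2 * D := by
    rw [Finset.sum_add_distrib, ← Finset.mul_sum, ← Finset.mul_sum, hDdef]
  have hmain : γ * (s * L) ≤ 2 * ((d:ℝ) * δ * s * L) + 4 * (d:ℝ) * s * Real.sqrt δ
      + 2 * ((d:ℝ) * δ * s) := by
    have h1 := h_c.trans hγH
    rw [hsum2A] at h1
    linarith [h_a, h_b, hDle]
  have hcancel : γ * L ≤ 2 * (d:ℝ) * δ * L + 4 * (d:ℝ) * Real.sqrt δ + 2 * (d:ℝ) * δ := by
    have h2 : (γ * L) * s ≤ (2 * (d:ℝ) * δ * L + 4 * (d:ℝ) * Real.sqrt δ + 2 * (d:ℝ) * δ) * s := by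
      have he1 : (γ * L) * s = γ * (s * L) := by ring
      have he2 : (2 * (d:ℝ) * δ * L + 4 * (d:ℝ) * Real.sqrt δ + 2 * (d:ℝ) * δ) * s
          = 2 * ((d:ℝ) * δ * s * L) + 4 * (d:ℝ) * s * Real.sqrt δ + 2 * ((d:ℝ) * δ * s) := by
        ring
      rw [he1, he2]
      exact hmain
    exact le_of_mul_le_mul_right h2 hspos
  have h2dδ : 2 * (d:ℝ) * δ < γ / 4 := by
    have := mul_lt_mul_of_pos_left hδ1 (by positivity : (0:ℝ) < 2 * d)
    have he : 2 * (d:ℝ) * (γ / (8 * d)) = γ / 4 := by field_simp; ring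
    linarith
  have hsq : Real.sqrt δ < γ * L₀ / (16 * d) := by
    have h1 := Real.sqrt_lt_sqrt hδpos.le hδ2
    rwa [Real.sqrt_sq (by positivity : (0:ℝ) ≤ γ * L₀ / (16 * d))] at h1
  have f1 : 2 * (d:ℝ) * δ * L ≤ (γ / 4) * L :=
    mul_le_mul_of_nonneg_right h2dδ.le hLpos.le
  have f2 : 4 * (d:ℝ) * Real.sqrt δ < γ * L₀ / 4 := by
    have := mul_lt_mul_of_pos_left hsq (by positivity : (0:ℝ) < 4 * d)
    have he : 4 * (d:ℝ) * (γ * L₀ / (16 * d)) = γ * L₀ / 4 := by field_simp; ring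
    linarith
  have f3 : 2 * (d:ℝ) * δ < γ * L₀ / 4 := by
    have := mul_lt_mul_of_pos_left hδ3 (by positivity : (0:ℝ) < 2 * d)
    have he : 2 * (d:ℝ) * (γ * L₀ / (8 * d)) = γ * L₀ / 4 := by field_simp; ring
    linarith
  have f4 : γ * L₀ ≤ γ * L := mul_le_mul_of_nonneg_left hLge hγ.le
  have f5 : 0 < γ * L := mul_pos hγ hLpos
  linarith [hcancel, f1, f2, f3, f4, f5]
end
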